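/- arXiv:1602.03098 — 3 statements merged into one kernel-verified Lean document; each statement's English description precedes it below -/
import Mathlib

section
/- Let H be a 5-Ore graph. For any vertex v ∈ V(H), there exists a diamond or an emerald of H disjoint from v. Moreover, if H ≠ K_5, then for any subgraph T of H isomorphic to K_4, there exists a diamond or an emerald of H disjoint from T. -/
open SimpleGraph

namespace Postle

noncomputable def epsC : ℝ := 1 / 21
noncomputable def delC : ℝ := 8 / 21
noncomputable def PC : ℝ := 48 / 21
noncomputable def QC : ℝ := 8 / 21

/-- The degree of a vertex, via the cardinality of its neighbor set. -/
noncomputable def degS {V : Type} (G : SimpleGraph V) (v : V) : ℕ :=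
  (G.neighborSet v).ncard

/-- A graph is 5-critical if it is not 4-colorable but every proper subgraph is. -/
def FiveCritical {V : Type} (G : SimpleGraph V) : Prop :=
  ¬ G.Colorable 4 ∧ ∀ H : SimpleGraph V, H < G → H.Colorable 4

/-- `G` is (isomorphic to) the complete graph `K₅`. -/
def IsK5 {V : Type} (G : SimpleGraph V) : Prop :=
  Nonempty (G ≃g (⊤ : SimpleGraph (Fin 5)))

/-- `T(G)`: the maximum, over collections of pairwise disjoint cliques of size 3 or 4 in `G`,
of (number of 3-cliques) + 2 * (number of 4-cliques); each clique of size `k` contributes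
`k - 2`. -/
noncomputable def TT {V : Type} (G : SimpleGraph V) : ℕ :=
  sSup { n : ℕ | ∃ C : Finset (Finset V),
    ((C : Set (Finset V)).Pairwise fun A B => Disjoint A B) ∧
    (∀ W ∈ C, G.IsClique (W : Set V) ∧ (W.card = 3 ∨ W.card = 4)) ∧
    n = ∑ W ∈ C, (W.card - 2) }

/-- The potential `p(G) = (9+ε)|V(G)| - 4|E(G)| - δ·T(G)` with `ε = 1/21`, `δ = 8/21`. -/
noncomputable def pot {V : Type} (G : SimpleGraph V) : ℝ :=
  (9 + epsC) * (Nat.card V : ℝ) - 4 * (G.edgeSet.ncard : ℝ) - delC * (TT G : ℝ)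

/-- `p_G(R) = p(G[R])`. -/
noncomputable def potOn {V : Type} (G : SimpleGraph V) (R : Set V) : ℝ :=
  pot (G.induce R)

/-- The Kostochka–Yancey potential `p_KY(G) = 9|V(G)| - 4|E(G)|`. -/
noncomputable def potKY {V : Type} (G : SimpleGraph V) : ℝ :=
  9 * (Nat.card V : ℝ) - 4 * (G.edgeSet.ncard : ℝ)

noncomputable def potKYOn {V : Type} (G : SimpleGraph V) (R : Set V) : ℝ :=
  potKY (G.induce R)

/-- `G` is an Ore-composition of `G₁` (the edge side, with replaced edge `xy`) and `G₂`
(the vertex side, with split vertex `z`): delete the edge `xy` of `G₁`, split `z` into two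
vertices of positive degree, and identify them with `x` and `y`. The set `S` records which
neighbors of `z` get attached to `x`. -/
def IsOreComposition {V V₁ V₂ : Type} (G : SimpleGraph V)
    (G₁ : SimpleGraph V₁) (G₂ : SimpleGraph V₂) : Prop :=
  ∃ (x y : V₁) (z : V₂) (f₁ : V₁ ↪ V) (f₂ : {w : V₂ // w ≠ z} ↪ V) (S : Set V₂),
    G₁.Adj x y ∧
    (∀ w ∈ S, G₂.Adj z w) ∧ S.Nonempty ∧ (G₂.neighborSet z \ S).Nonempty ∧
    Set.range ⇑f₁ ∩ Set.range ⇑f₂ = ∅ ∧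
    Set.range ⇑f₁ ∪ Set.range ⇑f₂ = Set.univ ∧
    ∀ a b : V, G.Adj a b ↔
      ((∃ a' b' : V₁, f₁ a' = a ∧ f₁ b' = b ∧ G₁.Adj a' b' ∧
          ¬(a' = x ∧ b' = y) ∧ ¬(a' = y ∧ b' = x)) ∨
       (∃ a' b' : {w : V₂ // w ≠ z}, f₂ a' = a ∧ f₂ b' = b ∧ G₂.Adj a'.1 b'.1) ∨
       (∃ w : {w : V₂ // w ≠ z}, G₂.Adj z w.1 ∧
         ((((a = f₁ x ∧ b = f₂ w) ∨ (b = f₁ x ∧ a = f₂ w)) ∧ w.1 ∈ S) ∨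
          (((a = f₁ y ∧ b = f₂ w) ∨ (b = f₁ y ∧ a = f₂ w)) ∧ w.1 ∉ S))))

/-- A graph is 5-Ore if it can be obtained from copies of `K₅` by repeated Ore-compositions. -/
inductive Is5Ore : {V : Type} → SimpleGraph V → Prop
  | k5 {V : Type} {G : SimpleGraph V} (h : IsK5 G) : Is5Ore G
  | ore {V V₁ V₂ : Type} {G : SimpleGraph V} {G₁ : SimpleGraph V₁} {G₂ : SimpleGraph V₂}
      (h₁ : Is5Ore G₁) (h₂ : Is5Ore G₂) (h : IsOreComposition G G₁ G₂) : Is5Ore G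

/-- The boundary of `R`: the vertices of `R` with a neighbor outside `R`. -/
def boundary {V : Type} (G : SimpleGraph V) (R : Set V) : Set V :=
  {v : V | v ∈ R ∧ ∃ w, w ∉ R ∧ G.Adj v w}

/-- The graph `G + uv` obtained by adding the edge `uv`. -/
noncomputable def addEdge {α : Type} (G : SimpleGraph α) (u v : α) : SimpleGraph α :=
  G ⊔ SimpleGraph.fromEdgeSet {s(u, v)}

/-- `R` is an Ore-collapsible subset of `G`: a proper subset whose boundary consists of exactly
two non-adjacent vertices `u, v` such that `G[R] + uv` is 5-Ore. -/
def OreCollapsible {V : Type} (G : SimpleGraph V) (R : Set V) : Prop :=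
  R ≠ Set.univ ∧ ∃ u v : ↥R, u.1 ≠ v.1 ∧ ¬ G.Adj u.1 v.1 ∧
    boundary G R = {u.1, v.1} ∧ Is5Ore (addEdge (G.induce R) u v)

/-- An emerald: a subgraph isomorphic to `K₄` all of whose vertices have degree 4 in `G`,
given by its vertex set. -/
def IsEmerald {V : Type} (G : SimpleGraph V) (S : Set V) : Prop :=
  S.ncard = 4 ∧ (∀ a ∈ S, ∀ b ∈ S, a ≠ b → G.Adj a b) ∧ ∀ v ∈ S, degS G v = 4

/-- A diamond: a subgraph isomorphic to `K₅ - e` in which the vertices not incident to `e`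
have degree 4 in `G`, given by its vertex set. -/
def IsDiamond {V : Type} (G : SimpleGraph V) (D : Set V) : Prop :=
  D.ncard = 5 ∧ ∃ u ∈ D, ∃ v ∈ D, u ≠ v ∧
    (∀ a ∈ D, ∀ b ∈ D, a ≠ b → ¬(a = u ∧ b = v) → ¬(a = v ∧ b = u) → G.Adj a b) ∧
    ∀ w ∈ D, w ≠ u → w ≠ v → degS G w = 4

/-- A graph is ungemmed if it contains neither a diamond nor an emerald. -/
def Ungemmed {V : Type} (G : SimpleGraph V) : Prop :=
  (¬ ∃ D : Set V, IsDiamond G D) ∧ ¬ ∃ S : Set V, IsEmerald G S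

/-- `R` is collapsible: a proper subset with `|R| ≥ 5` such that in every proper 4-coloring of
`G[R]` all boundary vertices of `R` receive the same color. -/
def Collapsible {V : Type} (G : SimpleGraph V) (R : Set V) : Prop :=
  R ≠ Set.univ ∧ 5 ≤ R.ncard ∧
    ∀ φ : (G.induce R).Coloring (Fin 4), ∀ u v : ↥R,
      u.1 ∈ boundary G R → v.1 ∈ boundary G R → φ u = φ v

/-- The critical complement of a collapsible set `R`: identify the boundary of `R` to a single
new vertex (`none`) and delete the rest of `R`. -/
noncomputable def criticalComplement {V : Type} (G : SimpleGraph V) (R : Set V) :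
    SimpleGraph (Option ↥(Rᶜ)) :=
  SimpleGraph.fromRel fun a b =>
    match a, b with
    | some w, some w' => G.Adj w.1 w'.1
    | none, some w => ∃ x ∈ boundary G R, G.Adj x w.1
    | _, _ => False

/-- The φ-identification `G_φ(R)`: vertices outside `R` together with four vertices `x_i`;
the vertices of `R` colored `i` are identified to `x_i`, and all edges `x_i x_j` are added. -/
noncomputable def phiIdent {V : Type} (G : SimpleGraph V) (R : Set V) (φ : ↥R → Fin 4) :
    SimpleGraph ((↥(Rᶜ)) ⊕ Fin 4) :=
  SimpleGraph.fromRel fun a b =>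
    match a, b with
    | Sum.inl w, Sum.inl w' => G.Adj w.1 w'.1
    | Sum.inl w, Sum.inr i => ∃ r : ↥R, φ r = i ∧ G.Adj r.1 w.1
    | Sum.inr _, Sum.inr _ => True
    | _, _ => False

/-- A critical extension of `R` in `G`: a proper 4-coloring `φ` of `G[R]` together with a
5-critical subgraph `W` of the φ-identification `G_φ(R)`, with vertex set `S`. -/
structure CriticalExtension {V : Type} (G : SimpleGraph V) (R : Set V) where
  φ : (G.induce R).Coloring (Fin 4)
  S : Set ((↥(Rᶜ)) ⊕ Fin 4)
  W : SimpleGraph ↥S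
  le : W ≤ (phiIdent G R ⇑φ).induce S
  crit : FiveCritical W

/-- The critical extension `R' = (V(W) - V(X)) ∪ R` of `R`. -/
noncomputable def CriticalExtension.verts {V : Type} {G : SimpleGraph V} {R : Set V}
    (E : CriticalExtension G R) : Set V :=
  R ∪ {v : V | ∃ h : v ∈ Rᶜ, Sum.inl (⟨v, h⟩ : ↥(Rᶜ)) ∈ E.S}

/-- The size `|X|` of the core `W ∩ X` of the extension. -/
noncomputable def CriticalExtension.coreCard {V : Type} {G : SimpleGraph V} {R : Set V}
    (E : CriticalExtension G R) : ℕ :=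
  {i : Fin 4 | Sum.inr i ∈ E.S}.ncard

/-- The graph `W - X` obtained from the extender `W` by deleting the core vertices. -/
noncomputable def CriticalExtension.WminusX {V : Type} {G : SimpleGraph V} {R : Set V}
    (E : CriticalExtension G R) :=
  E.W.induce {w : ↥E.S | w.1.isLeft = true}

/-- `f(n) = (9+ε)n - 4·C(n,2)`. -/
noncomputable def fExt (n : ℕ) : ℝ := (9 + epsC) * (n : ℝ) - 4 * ((n.choose 2 : ℕ) : ℝ)

/-- The closed neighborhood of a vertex. -/
def closedNbhd {V : Type} (G : SimpleGraph V) (v : V) : Set V :=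
  insert v (G.neighborSet v)

/-- A cluster: a maximal set of degree-four vertices with the same closed neighborhood. -/
def IsCluster {V : Type} (G : SimpleGraph V) (C : Set V) : Prop :=
  C.Nonempty ∧ (∀ v ∈ C, degS G v = 4) ∧
  (∀ u ∈ C, ∀ v ∈ C, closedNbhd G u = closedNbhd G v) ∧
  ∀ C' : Set V, C ⊆ C' → (∀ v ∈ C', degS G v = 4) →
    (∀ u ∈ C', ∀ v ∈ C', closedNbhd G u = closedNbhd G v) → C' = C

open Classical in
/-- The list of cluster sizes of `G`, in decreasing order. -/
noncomputable def clusterList {V : Type} [Fintype V] (G : SimpleGraph V) : List ℕ :=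
  ((((Finset.univ : Finset V).filter fun v => degS G v = 4).image
      fun v => (Finset.univ : Finset V).filter
        fun u => degS G u = 4 ∧ closedNbhd G u = closedNbhd G v).val.map
    Finset.card).sort (· ≤ ·) |>.reverse

/-- `H` is smaller than `G`: fewer vertices; or the same number of vertices and more edges; or
the same number of vertices and edges and `H` precedes `G` in the lexicographic ordering of
cluster sizes listed in decreasing order. -/
def Smaller {V₁ V₂ : Type} [Fintype V₁] [Fintype V₂]
    (H : SimpleGraph V₁) (G : SimpleGraph V₂) : Prop :=
  Nat.card V₁ < Nat.card V₂ ∨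
  (Nat.card V₁ = Nat.card V₂ ∧ G.edgeSet.ncard < H.edgeSet.ncard) ∨
  (Nat.card V₁ = Nat.card V₂ ∧ H.edgeSet.ncard = G.edgeSet.ncard ∧
    List.Lex (· > ·) (clusterList H) (clusterList G))

/-- A 5-critical graph `G` is good if every smaller 5-critical graph satisfies the conclusion
of the main theorem. -/
def Good {V : Type} [Fintype V] (G : SimpleGraph V) : Prop :=
  FiveCritical G ∧
    ∀ (V' : Type) [Fintype V'] (H : SimpleGraph V'), FiveCritical H → Smaller H G →
      (IsK5 H → pot H = 5 + 5 * epsC - 2 * delC) ∧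
      (Is5Ore H → ¬ IsK5 H →
        pot H ≤ 5 + (Nat.card V' : ℝ) * epsC - (2 + ((Nat.card V' : ℝ) - 1) / 4) * delC) ∧
      (¬ Is5Ore H → pot H ≤ 5 - PC)

/-- `G` is tight if it is good and `p(G) ≥ 5 - P - Q`. -/
def Tight {V : Type} [Fintype V] (G : SimpleGraph V) : Prop :=
  Good G ∧ pot G ≥ 5 - PC - QC

/-- `u, v` is an identifiable pair in a proper subset `R`: `G[R] + uv` is not 4-colorable. -/
def IdentifiablePair {V : Type} (G : SimpleGraph V) (R : Set V) (u v : ↥R) : Prop :=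
  R ≠ Set.univ ∧ ¬ (addEdge (G.induce R) u v).Colorable 4

/-! Induction along the Ore compositions, after adding a clause on edges: for every edge `ab`
there is a gem whose degree-constrained core avoids `a` and `b`. When `G₁` (edge `xy`) and `G₂`
(split vertex `z`) are composed, a gem of `G₂` avoiding `z` and a gem of `G₁` whose core avoids
`x` and `y` reappear unchanged, the first away from the `G₁` side and the second away from the
`G₂` side. A `K₄` of the composition either lies on one side, or consists of one of `x`, `y` and
three vertices of `G₂`, and then becomes a `K₄` of `G₂` through `z`. -/

section Gem

variable {V W : Type} {G : SimpleGraph V} {B K : Set V}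

/-- The emerald `B = K`, or a diamond `B` whose two vertices outside its core `K` span the
possibly missing edge; the core is the part required to have degree four. -/
def IsGemCore (G : SimpleGraph V) (B K : Set V) : Prop :=
  K ⊆ B ∧ (∀ v ∈ K, degS G v = 4) ∧ (∀ a ∈ K, ∀ b ∈ B, a ≠ b → G.Adj a b) ∧
    ((K = B ∧ B.ncard = 4) ∨ (B.ncard = 5 ∧ K.ncard = 3))

lemma IsGemCore.isDiamond_or_isEmerald (h : IsGemCore G B K) :
    IsDiamond G B ∨ IsEmerald G B := by
  obtain ⟨hKB, hdeg, hadj, ⟨rfl, h4⟩ | ⟨h5, h3⟩⟩ := h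
  · exact Or.inr ⟨h4, fun a ha b hb hab => hadj a ha b hb hab, hdeg⟩
  have hB : B.Finite := Set.finite_of_ncard_pos (by omega)
  have h2 : (B \ K).ncard = 2 := by rw [Set.ncard_sdiff hKB (hB.subset hKB), h5, h3]
  obtain ⟨u, v, huv, hBK⟩ := Set.ncard_eq_two.mp h2
  have hu : u ∈ B \ K := hBK ▸ Set.mem_insert u {v}
  have hv : v ∈ B \ K := hBK ▸ Set.mem_insert_of_mem u rfl
  have hcore : ∀ w ∈ B, w ≠ u → w ≠ v → w ∈ K := fun w hw hwu hwv => by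
    by_contra hwK
    have : w ∈ B \ K := ⟨hw, hwK⟩
    rw [hBK] at this
    rcases this with rfl | rfl <;> contradiction
  refine Or.inl ⟨h5, u, hu.1, v, hv.1, huv, fun a ha b hb hab h1 h2 => ?_,
    fun w hw hwu hwv => hdeg w (hcore w hw hwu hwv)⟩
  by_cases haK : a ∈ K
  · exact hadj a haK b hb hab
  by_cases hbK : b ∈ K
  · exact (hadj b hbK a ha hab.symm).symm
  have ha' : a ∈ B \ K := ⟨ha, haK⟩
  have hb' : b ∈ B \ K := ⟨hb, hbK⟩
  rw [hBK] at ha' hb'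
  rcases ha' with rfl | rfl <;> rcases hb' with rfl | rfl <;> simp_all

lemma IsGemCore.image {G' : SimpleGraph W} (h : IsGemCore G B K) {f : V → W}
    (hf : Set.InjOn f B) (hadj : ∀ a ∈ K, ∀ b ∈ B, G.Adj a b → G'.Adj (f a) (f b))
    (hdeg : ∀ v ∈ K, degS G' (f v) = degS G v) : IsGemCore G' (f '' B) (f '' K) := by
  obtain ⟨hKB, hK4, hKadj, hcard⟩ := h
  refine ⟨Set.image_mono hKB, ?_, ?_, ?_⟩
  · rintro _ ⟨v, hv, rfl⟩
    rw [hdeg v hv, hK4 v hv]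
  · rintro _ ⟨a, ha, rfl⟩ _ ⟨b, hb, rfl⟩ hab
    exact hadj a ha b hb (hKadj a ha b hb (ne_of_apply_ne f hab))
  · rw [hf.ncard_image, (hf.mono hKB).ncard_image]
    rcases hcard with ⟨rfl, h4⟩ | h
    · exact Or.inl ⟨rfl, h4⟩
    · exact Or.inr h

end Gem

namespace IsK5

variable {V : Type} {G : SimpleGraph V}

lemma adj_iff (h : IsK5 G) {a b : V} : G.Adj a b ↔ a ≠ b := by
  obtain ⟨e⟩ := h
  rw [← e.map_adj_iff, SimpleGraph.top_adj, e.injective.ne_iff]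

lemma finite (h : IsK5 G) : Finite V :=
  let ⟨e⟩ := h
  Finite.of_equiv _ e.toEquiv.symm

lemma card_eq (h : IsK5 G) : Nat.card V = 5 := by
  obtain ⟨e⟩ := h
  rw [Nat.card_congr e.toEquiv, Nat.card_eq_fintype_card, Fintype.card_fin]

lemma neighborSet_eq (h : IsK5 G) (v : V) : G.neighborSet v = {v}ᶜ := by
  ext w
  simp [h.adj_iff, eq_comm]

lemma degS_eq (h : IsK5 G) (v : V) : degS G v = 4 := by
  have := h.finite
  rw [degS, h.neighborSet_eq, Set.ncard_compl, h.card_eq, Set.ncard_singleton]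

lemma isGemCore (h : IsK5 G) {B K : Set V} (hKB : K ⊆ B)
    (hcard : (K = B ∧ B.ncard = 4) ∨ (B.ncard = 5 ∧ K.ncard = 3)) : IsGemCore G B K :=
  ⟨hKB, fun v _ => h.degS_eq v, fun _ _ _ _ hab => h.adj_iff.2 hab, hcard⟩

end IsK5

structure HasAvoidingGems {V : Type} (G : SimpleGraph V) : Prop where
  vertex : ∀ v, ∃ B K, IsGemCore G B K ∧ v ∉ B
  edge : ∀ a b, G.Adj a b → ∃ B K, IsGemCore G B K ∧ a ∉ K ∧ b ∉ K
  clique : ¬ IsK5 G → ∀ T : Set V, T.ncard = 4 → (∀ a ∈ T, ∀ b ∈ T, a ≠ b → G.Adj a b) →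
    ∃ B K, IsGemCore G B K ∧ Disjoint B T

lemma IsK5.hasAvoidingGems {V : Type} {G : SimpleGraph V} (h : IsK5 G) : HasAvoidingGems G := by
  have := h.finite
  refine ⟨fun v => ?_, fun a b hab => ?_, fun hK => absurd h hK⟩
  · refine ⟨{v}ᶜ, {v}ᶜ, h.isGemCore subset_rfl (Or.inl ⟨rfl, ?_⟩), by simp⟩
    rw [Set.ncard_compl, h.card_eq, Set.ncard_singleton]
  · refine ⟨Set.univ, {a, b}ᶜ, h.isGemCore (Set.subset_univ _) (Or.inr ⟨?_, ?_⟩), by simp, by simp⟩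
    · rw [Set.ncard_univ, h.card_eq]
    · rw [Set.ncard_compl, h.card_eq, Set.ncard_pair (G.ne_of_adj hab)]

open Classical in
noncomputable def extendAt {α β : Type} {z : α} (f : {w // w ≠ z} → β) (p : β) (b : α) : β :=
  if h : b = z then p else f ⟨b, h⟩

section extendAt

variable {α β : Type} {z : α} {f : {w // w ≠ z} → β} {p : β}

@[simp] lemma extendAt_self : extendAt f p z = p := dif_pos rfl

@[simp] lemma extendAt_val (u : {w // w ≠ z}) : extendAt f p u = f u := dif_neg u.2

lemma extendAt_of_ne {b : α} (hb : b ≠ z) : extendAt f p b = f ⟨b, hb⟩ := dif_neg hb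

lemma extendAt_injective (hf : f.Injective) (hp : p ∉ Set.range f) :
    (extendAt f p).Injective := by
  intro a b hab
  by_cases ha : a = z <;> by_cases hb : b = z
  · rw [ha, hb]
  · rw [ha, extendAt_self, extendAt_of_ne hb] at hab
    exact absurd ⟨_, hab.symm⟩ hp
  · rw [hb, extendAt_self, extendAt_of_ne ha] at hab
    exact absurd ⟨_, hab⟩ hp
  · rw [extendAt_of_ne ha, extendAt_of_ne hb] at hab
    exact congrArg Subtype.val (hf hab)

end extendAt

structure OreWitness {V V₁ V₂ : Type} (H : SimpleGraph V) (G₁ : SimpleGraph V₁)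
    (G₂ : SimpleGraph V₂) (x y : V₁) (z : V₂) (f₁ : V₁ ↪ V) (f₂ : {w : V₂ // w ≠ z} ↪ V)
    (S : Set V₂) : Prop where
  adj_xy : G₁.Adj x y
  adj_of_mem : ∀ w ∈ S, G₂.Adj z w
  nonempty : S.Nonempty
  nonempty_compl : (G₂.neighborSet z \ S).Nonempty
  range_inter : Set.range ⇑f₁ ∩ Set.range ⇑f₂ = ∅
  range_union : Set.range ⇑f₁ ∪ Set.range ⇑f₂ = Set.univ
  adj_iff : ∀ a b : V, H.Adj a b ↔
      ((∃ a' b' : V₁, f₁ a' = a ∧ f₁ b' = b ∧ G₁.Adj a' b' ∧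
          ¬(a' = x ∧ b' = y) ∧ ¬(a' = y ∧ b' = x)) ∨
       (∃ a' b' : {w : V₂ // w ≠ z}, f₂ a' = a ∧ f₂ b' = b ∧ G₂.Adj a'.1 b'.1) ∨
       (∃ w : {w : V₂ // w ≠ z}, G₂.Adj z w.1 ∧
         ((((a = f₁ x ∧ b = f₂ w) ∨ (b = f₁ x ∧ a = f₂ w)) ∧ w.1 ∈ S) ∨
          (((a = f₁ y ∧ b = f₂ w) ∨ (b = f₁ y ∧ a = f₂ w)) ∧ w.1 ∉ S))))

namespace OreWitness

variable {V V₁ V₂ : Type} {H : SimpleGraph V} {G₁ : SimpleGraph V₁} {G₂ : SimpleGraph V₂}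
  {x y : V₁} {z : V₂} {f₁ : V₁ ↪ V} {f₂ : {w : V₂ // w ≠ z} ↪ V} {S : Set V₂}
  (W : OreWitness H G₁ G₂ x y z f₁ f₂ S)
include W

lemma f₁_ne_f₂ (a : V₁) (u : {w : V₂ // w ≠ z}) : f₁ a ≠ f₂ u := fun h =>
  (Set.eq_empty_iff_forall_notMem.mp W.range_inter) (f₁ a) ⟨⟨a, rfl⟩, ⟨u, h.symm⟩⟩

lemma exists_eq (v : V) : (∃ a, f₁ a = v) ∨ ∃ u, f₂ u = v := by
  rw [← Set.mem_range, ← Set.mem_range, ← Set.mem_union, W.range_union]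
  trivial

lemma adj_f₁_f₁ (a b : V₁) :
    H.Adj (f₁ a) (f₁ b) ↔ G₁.Adj a b ∧ ¬(a = x ∧ b = y) ∧ ¬(a = y ∧ b = x) := by
  have hne := W.f₁_ne_f₂
  have hne' := fun a u => (W.f₁_ne_f₂ a u).symm
  rw [W.adj_iff]
  aesop

lemma not_adj_f₁_x_f₁_y : ¬ H.Adj (f₁ x) (f₁ y) := fun h =>
  ((W.adj_f₁_f₁ x y).1 h).2.1 ⟨rfl, rfl⟩

lemma adj_f₂_f₂ (u u' : {w : V₂ // w ≠ z}) : H.Adj (f₂ u) (f₂ u') ↔ G₂.Adj u u' := by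
  have hne := W.f₁_ne_f₂
  have hne' := fun a u => (W.f₁_ne_f₂ a u).symm
  rw [W.adj_iff]
  aesop

lemma adj_f₁_f₂ (a : V₁) (u : {w : V₂ // w ≠ z}) : H.Adj (f₁ a) (f₂ u) ↔
    G₂.Adj z u ∧ ((a = x ∧ u.1 ∈ S) ∨ (a = y ∧ u.1 ∉ S)) := by
  have hne := W.f₁_ne_f₂
  have hne' := fun a u => (W.f₁_ne_f₂ a u).symm
  have hxy := W.adj_xy.ne
  rw [W.adj_iff]
  aesop

lemma swap : OreWitness H G₁ G₂ y x z f₁ f₂ (G₂.neighborSet z \ S) := by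
  refine ⟨W.adj_xy.symm, fun w hw => hw.1, W.nonempty_compl, ?_, W.range_inter,
    W.range_union, fun a b => ?_⟩
  · obtain ⟨s, hs⟩ := W.nonempty
    exact ⟨s, W.adj_of_mem s hs, fun h => h.2 hs⟩
  rw [W.adj_iff a b]
  constructor
  · rintro (⟨a', b', ha, hb, hab, h1, h2⟩ | h | ⟨w, hzw, ⟨hx', hmem⟩ | ⟨hy', hmem⟩⟩)
    · exact Or.inl ⟨a', b', ha, hb, hab, h2, h1⟩
    · exact Or.inr (Or.inl h)
    · exact Or.inr (Or.inr ⟨w, hzw, Or.inr ⟨hx', fun h => h.2 hmem⟩⟩)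
    · exact Or.inr (Or.inr ⟨w, hzw, Or.inl ⟨hy', hzw, hmem⟩⟩)
  · rintro (⟨a', b', ha, hb, hab, h1, h2⟩ | h | ⟨w, hzw, ⟨hy', hmem⟩ | ⟨hx', hmem⟩⟩)
    · exact Or.inl ⟨a', b', ha, hb, hab, h2, h1⟩
    · exact Or.inr (Or.inl h)
    · exact Or.inr (Or.inr ⟨w, hzw, Or.inr ⟨hy', hmem.2⟩⟩)
    · exact Or.inr (Or.inr ⟨w, hzw, Or.inl ⟨hx', not_not.mp fun h => hmem ⟨hzw, h⟩⟩⟩)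

lemma extendAt_f₁_injective (a : V₁) : (extendAt f₂ (f₁ a)).Injective :=
  extendAt_injective f₂.injective fun ⟨u, hu⟩ => W.f₁_ne_f₂ a u hu.symm

lemma extendAt_eq_f₁_iff {a b : V₁} {c : V₂} :
    extendAt f₂ (f₁ a) c = f₁ b ↔ c = z ∧ a = b := by
  by_cases hc : c = z
  · simp [hc]
  · simpa [extendAt_of_ne hc, hc] using (W.f₁_ne_f₂ b _).symm

lemma extendAt_eq_f₂_iff {a : V₁} {c : V₂} {u : {w : V₂ // w ≠ z}} :
    extendAt f₂ (f₁ a) c = f₂ u ↔ c = u := by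
  by_cases hc : c = z
  · simpa [hc, u.2.symm] using W.f₁_ne_f₂ a u
  · simp [extendAt_of_ne hc, Subtype.ext_iff]

lemma adj_extendAt_iff {b c : V₂} (hb : b ≠ z) (hc : c ≠ z) (p : V) :
    H.Adj (extendAt f₂ p b) (extendAt f₂ p c) ↔ G₂.Adj b c := by
  rw [extendAt_of_ne hb, extendAt_of_ne hc, W.adj_f₂_f₂]

lemma adj_of_adj_extendAt {b c : V₂}
    (h : H.Adj (extendAt f₂ (f₁ x) b) (extendAt f₂ (f₁ x) c)) : G₂.Adj b c := by
  by_cases hb : b = z <;> by_cases hc : c = z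
  · subst hb hc
    exact absurd h H.irrefl
  · subst hb
    rw [extendAt_self, extendAt_of_ne hc, W.adj_f₁_f₂] at h
    exact h.1
  · subst hc
    rw [extendAt_self, extendAt_of_ne hb, H.adj_comm, W.adj_f₁_f₂] at h
    exact h.1.symm
  · exact (W.adj_extendAt_iff hb hc _).1 h

lemma neighborSet_f₁ {a : V₁} (hax : a ≠ x) (hay : a ≠ y) :
    H.neighborSet (f₁ a) = f₁ '' G₁.neighborSet a := by
  ext t
  rcases W.exists_eq t with ⟨b, rfl⟩ | ⟨u, rfl⟩
  · simp [W.adj_f₁_f₁, hax, hay]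
  · simp [W.adj_f₁_f₂, hax, hay, W.f₁_ne_f₂]

lemma neighborSet_f₂ {a : V₁} {u : {w : V₂ // w ≠ z}}
    (ha : a = x ∧ u.1 ∈ S ∨ a = y ∧ u.1 ∉ S) :
    H.neighborSet (f₂ u) = extendAt f₂ (f₁ a) '' G₂.neighborSet u := by
  ext t
  rcases W.exists_eq t with ⟨b, rfl⟩ | ⟨u', rfl⟩
  · simp only [SimpleGraph.mem_neighborSet, Set.mem_image, W.extendAt_eq_f₁_iff, H.adj_comm,
      G₂.adj_comm, W.adj_f₁_f₂]
    aesop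
  · simp [W.extendAt_eq_f₂_iff, W.adj_f₂_f₂]

lemma extendAt_f₁_eq_f₁_iff {w : {w : V₂ // w ≠ z}} {a b : V₁} :
    extendAt (fun a : {a // a ≠ x} => f₁ a) (f₂ w) a = f₁ b ↔ a ≠ x ∧ a = b := by
  by_cases ha : a = x
  · simpa [ha] using (W.f₁_ne_f₂ b w).symm
  · simp [extendAt_of_ne ha, ha]

lemma extendAt_f₁_eq_f₂_iff {w u : {w : V₂ // w ≠ z}} {a : V₁} :
    extendAt (fun a : {a // a ≠ x} => f₁ a) (f₂ w) a = f₂ u ↔ a = x ∧ w = u := by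
  by_cases ha : a = x
  · simp [ha]
  · simpa [extendAt_of_ne ha, ha] using W.f₁_ne_f₂ a u

/-- `y` trades its neighbour `x` for the unique neighbour of `z` outside `S`. -/
lemma neighborSet_f₁_y {w : {w : V₂ // w ≠ z}} (hw : w.1 ∈ G₂.neighborSet z \ S)
    (hS : (G₂.neighborSet z \ S).Subsingleton) :
    H.neighborSet (f₁ y) =
      extendAt (fun a : {a // a ≠ x} => f₁ a) (f₂ w) '' G₁.neighborSet y := by
  ext t
  rcases W.exists_eq t with ⟨b, rfl⟩ | ⟨u, rfl⟩
  · simp only [SimpleGraph.mem_neighborSet, Set.mem_image, W.extendAt_f₁_eq_f₁_iff, W.adj_f₁_f₁]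
    have := W.adj_xy.ne
    aesop
  · have hyx := W.adj_xy.symm
    simp only [SimpleGraph.mem_neighborSet, Set.mem_image, W.extendAt_f₁_eq_f₂_iff, W.adj_f₁_f₂]
    have : G₂.Adj z u ∧ u.1 ∉ S ↔ w = u :=
      ⟨fun hu => Subtype.ext (hS hw hu), fun h => h ▸ hw⟩
    have := W.adj_xy.ne
    aesop

lemma degS_f₁ {a : V₁} (hax : a ≠ x) (hay : a ≠ y) : degS H (f₁ a) = degS G₁ a := by
  rw [degS, degS, W.neighborSet_f₁ hax hay, Set.ncard_image_of_injective _ f₁.injective]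

lemma degS_f₂ (u : {w : V₂ // w ≠ z}) : degS H (f₂ u) = degS G₂ u := by
  obtain ⟨a, ha⟩ : ∃ a, a = x ∧ u.1 ∈ S ∨ a = y ∧ u.1 ∉ S := by
    by_cases hu : u.1 ∈ S
    exacts [⟨x, Or.inl ⟨rfl, hu⟩⟩, ⟨y, Or.inr ⟨rfl, hu⟩⟩]
  rw [degS, degS, W.neighborSet_f₂ ha,
    Set.ncard_image_of_injective _ (W.extendAt_f₁_injective a)]

lemma degS_f₁_y (hS : (G₂.neighborSet z \ S).Subsingleton) : degS H (f₁ y) = degS G₁ y := by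
  obtain ⟨w, hw⟩ := W.nonempty_compl
  have hwz : w ≠ z := hw.1.ne'
  rw [degS, degS, W.neighborSet_f₁_y (w := ⟨w, hwz⟩) hw hS,
    Set.ncard_image_of_injective _ (extendAt_injective (f := fun a : {a // a ≠ x} => f₁ a)
      (f₁.injective.comp Subtype.val_injective)
      fun ⟨a, ha⟩ => W.f₁_ne_f₂ a _ ha)]

lemma isGemCore_image_extendAt {B K : Set V₂} (h : IsGemCore G₂ B K) (hz : z ∉ B) :
    IsGemCore H (extendAt f₂ (f₁ x) '' B) (extendAt f₂ (f₁ x) '' K) := by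
  have hne : ∀ b ∈ B, b ≠ z := fun b hb hbz => hz (hbz ▸ hb)
  refine h.image (W.extendAt_f₁_injective x).injOn
    (fun a ha b hb hab => (W.adj_extendAt_iff (hne a (h.1 ha)) (hne b hb) _).2 hab)
    fun v hv => ?_
  rw [extendAt_of_ne (hne v (h.1 hv)), W.degS_f₂]

lemma isGemCore_image_f₁ {B K : Set V₁} (h : IsGemCore G₁ B K) (hx : x ∉ K) (hy : y ∉ K) :
    IsGemCore H (f₁ '' B) (f₁ '' K) := by
  have hne : ∀ a ∈ K, a ≠ x ∧ a ≠ y := fun a ha => ⟨ne_of_mem_of_not_mem ha hx,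
    ne_of_mem_of_not_mem ha hy⟩
  refine h.image f₁.injective.injOn (fun a ha b _ hab => ?_)
    fun v hv => W.degS_f₁ (hne v hv).1 (hne v hv).2
  exact (W.adj_f₁_f₁ a b).2 ⟨hab, fun h' => (hne a ha).1 h'.1, fun h' => (hne a ha).2 h'.1⟩

lemma isGemCore_image_f₁_of_subsingleton {B K : Set V₁} (h : IsGemCore G₁ B K) (hx : x ∉ B)
    (hS : (G₂.neighborSet z \ S).Subsingleton) : IsGemCore H (f₁ '' B) (f₁ '' K) := by
  have hne : ∀ a ∈ B, a ≠ x := fun a ha => ne_of_mem_of_not_mem ha hx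
  refine h.image f₁.injective.injOn (fun a ha b hb hab => ?_) fun v hv => ?_
  · exact (W.adj_f₁_f₁ a b).2 ⟨hab, fun h' => hne a (h.1 ha) h'.1, fun h' => hne b hb h'.2⟩
  · by_cases hvy : v = y
    · rw [hvy, W.degS_f₁_y hS]
    · exact W.degS_f₁ (hne v (h.1 hv)) hvy

lemma eq_x_or_eq_y_of_adj {a : V₁} {u : {w : V₂ // w ≠ z}} (h : H.Adj (f₁ a) (f₂ u)) :
    a = x ∨ a = y := by
  rcases ((W.adj_f₁_f₂ a u).1 h).2 with h' | h'
  exacts [Or.inl h'.1, Or.inr h'.1]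

lemma f₂_notMem_range_f₁ (u : {w : V₂ // w ≠ z}) : f₂ u ∉ Set.range f₁ :=
  fun ⟨a, ha⟩ => W.f₁_ne_f₂ a u ha

lemma notMem_of_adj_f₂ {K : Set V} (hK : K ⊆ Set.range f₁) (hx : f₁ x ∉ K) (hy : f₁ y ∉ K)
    {v : V} {u : {w : V₂ // w ≠ z}} (h : H.Adj v (f₂ u)) : v ∉ K := by
  rcases W.exists_eq v with ⟨a, rfl⟩ | ⟨u', rfl⟩
  · rcases W.eq_x_or_eq_y_of_adj h with rfl | rfl <;> assumption
  · exact fun hv => W.f₂_notMem_range_f₁ u' (hK hv)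

lemma exists_gemCore_subset_range_f₁ (h₁ : HasAvoidingGems G₁) :
    ∃ B K, IsGemCore H B K ∧ B ⊆ Set.range f₁ ∧ f₁ x ∉ K ∧ f₁ y ∉ K := by
  obtain ⟨B, K, hBK, hx, hy⟩ := h₁.edge x y W.adj_xy
  exact ⟨_, _, W.isGemCore_image_f₁ hBK hx hy, Set.image_subset_range _ _,
    fun h => hx (f₁.injective.mem_set_image.1 h), fun h => hy (f₁.injective.mem_set_image.1 h)⟩

lemma exists_gemCore_disjoint_range_f₁ (h₂ : HasAvoidingGems G₂) :
    ∃ B K, IsGemCore H B K ∧ Disjoint B (Set.range f₁) := by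
  obtain ⟨B, K, hBK, hz⟩ := h₂.vertex z
  refine ⟨_, _, W.isGemCore_image_extendAt hBK hz, Set.disjoint_left.2 ?_⟩
  rintro _ ⟨b, hb, rfl⟩ ⟨a, ha⟩
  exact hz ((W.extendAt_eq_f₁_iff.1 ha.symm).1 ▸ hb)

lemma subset_range_extendAt {T : Set V} (hT : ∀ a ∈ T, ∀ b ∈ T, a ≠ b → H.Adj a b)
    (hx : f₁ x ∈ T) {u : {w : V₂ // w ≠ z}} (hu : f₂ u ∈ T) :
    T ⊆ Set.range (extendAt f₂ (f₁ x)) := by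
  intro t ht
  rcases W.exists_eq t with ⟨a, rfl⟩ | ⟨u', rfl⟩
  · rcases W.eq_x_or_eq_y_of_adj (hT _ ht _ hu (W.f₁_ne_f₂ a u)) with rfl | rfl
    · exact ⟨z, extendAt_self⟩
    · exact absurd (hT _ hx _ ht fun h => W.adj_xy.ne (f₁.injective h)) W.not_adj_f₁_x_f₁_y
  · exact ⟨u', extendAt_val u'⟩

/-- If `G₂` is `K₅`, the `K₄` of `G₂` through `z` pulled back from `T` leaves `z` a single
neighbour outside `S`, so `y` keeps its degree and a gem of `G₁` avoiding `x` survives. -/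
lemma exists_gemCore_disjoint_of_f₁_x_mem (h₁ : HasAvoidingGems G₁) (h₂ : HasAvoidingGems G₂)
    {T : Set V} (hT4 : T.ncard = 4) (hT : ∀ a ∈ T, ∀ b ∈ T, a ≠ b → H.Adj a b)
    (hx : f₁ x ∈ T) {u : {w : V₂ // w ≠ z}} (hu : f₂ u ∈ T) :
    ∃ B K, IsGemCore H B K ∧ Disjoint B T := by
  set g := extendAt f₂ (f₁ x)
  have hg := W.extendAt_f₁_injective x
  have hgz : g z = f₁ x := extendAt_self
  have hTg : T ⊆ Set.range g := W.subset_range_extendAt hT hx hu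
  set T₂ := g ⁻¹' T
  have hT₂4 : T₂.ncard = 4 := by
    rw [← Set.ncard_image_of_injective _ hg, Set.image_preimage_eq_of_subset hTg, hT4]
  have hzT₂ : z ∈ T₂ := show g z ∈ T from hgz ▸ hx
  have hT₂ : ∀ a ∈ T₂, ∀ b ∈ T₂, a ≠ b → G₂.Adj a b := fun a ha b hb hab =>
    W.adj_of_adj_extendAt (hT _ ha _ hb (hg.ne hab))
  by_cases hK : IsK5 G₂
  · have := hK.finite
    have hsub : G₂.neighborSet z \ S ⊆ T₂ᶜ := fun w hw hwT => hw.2 <| by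
      have hwz : w ≠ z := hw.1.ne'
      have hadj := hT _ hx _ hwT (hgz ▸ hg.ne hwz.symm)
      rw [show g w = f₂ ⟨w, hwz⟩ from extendAt_of_ne hwz, W.adj_f₁_f₂] at hadj
      exact hadj.2.elim (·.2) fun h => absurd h.1 W.adj_xy.ne
    have hS : (G₂.neighborSet z \ S).Subsingleton := by
      refine Set.Subsingleton.anti ?_ hsub
      rw [← Set.ncard_le_one_iff_subsingleton, Set.ncard_compl, hK.card_eq, hT₂4]
    obtain ⟨B, K, hBK, hxB⟩ := h₁.vertex x
    refine ⟨_, _, W.isGemCore_image_f₁_of_subsingleton hBK hxB hS, Set.disjoint_left.2 ?_⟩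
    rintro _ ⟨a, ha, rfl⟩ haT
    obtain ⟨c, hc⟩ := hTg haT
    exact hxB ((W.extendAt_eq_f₁_iff.1 hc).2 ▸ ha)
  · obtain ⟨B, K, hBK, hBT⟩ := h₂.clique hK T₂ hT₂4 hT₂
    refine ⟨_, _, W.isGemCore_image_extendAt hBK (Set.disjoint_right.1 hBT hzT₂),
      Set.disjoint_left.2 ?_⟩
    rintro _ ⟨b, hb, rfl⟩ hbT
    exact Set.disjoint_left.1 hBT hb hbT

lemma hasAvoidingGems (h₁ : HasAvoidingGems G₁) (h₂ : HasAvoidingGems G₂) :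
    HasAvoidingGems H := by
  obtain ⟨B₁, K₁, hB₁, hB₁f, hx, hy⟩ := W.exists_gemCore_subset_range_f₁ h₁
  obtain ⟨B₂, K₂, hB₂, hB₂f⟩ := W.exists_gemCore_disjoint_range_f₁ h₂
  have hK₁ : K₁ ⊆ Set.range f₁ := hB₁.1.trans hB₁f
  have hK₂ : ∀ a, f₁ a ∉ K₂ := fun a ha => Set.disjoint_left.1 hB₂f (hB₂.1 ha) ⟨a, rfl⟩
  refine ⟨fun v => ?_, fun a b hab => ?_, fun _ T hT4 hT => ?_⟩
  · rcases W.exists_eq v with ⟨a, rfl⟩ | ⟨u, rfl⟩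
    · exact ⟨B₂, K₂, hB₂, fun h => Set.disjoint_left.1 hB₂f h ⟨a, rfl⟩⟩
    · exact ⟨B₁, K₁, hB₁, fun h => W.f₂_notMem_range_f₁ u (hB₁f h)⟩
  · rcases W.exists_eq a with ⟨c, rfl⟩ | ⟨p, rfl⟩ <;>
      rcases W.exists_eq b with ⟨d, rfl⟩ | ⟨q, rfl⟩
    · exact ⟨B₂, K₂, hB₂, hK₂ c, hK₂ d⟩
    · exact ⟨B₁, K₁, hB₁, W.notMem_of_adj_f₂ hK₁ hx hy hab,
        fun h => W.f₂_notMem_range_f₁ q (hK₁ h)⟩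
    · exact ⟨B₁, K₁, hB₁, fun h => W.f₂_notMem_range_f₁ p (hK₁ h),
        W.notMem_of_adj_f₂ hK₁ hx hy hab.symm⟩
    · exact ⟨B₁, K₁, hB₁, fun h => W.f₂_notMem_range_f₁ p (hK₁ h),
        fun h => W.f₂_notMem_range_f₁ q (hK₁ h)⟩
  by_cases hT₁ : Disjoint T (Set.range f₁)
  · exact ⟨B₁, K₁, hB₁, Set.disjoint_of_subset_left hB₁f hT₁.symm⟩
  by_cases hT₂ : T ⊆ Set.range f₁
  · exact ⟨B₂, K₂, hB₂, hB₂f.mono_right hT₂⟩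
  obtain ⟨_, haT, a, rfl⟩ := Set.not_disjoint_iff.1 hT₁
  obtain ⟨t, htT, ht⟩ := Set.not_subset.1 hT₂
  obtain ⟨u, rfl⟩ := (W.exists_eq t).resolve_left fun ⟨a, ha⟩ => ht ⟨a, ha⟩
  rcases W.eq_x_or_eq_y_of_adj (hT _ haT _ htT (W.f₁_ne_f₂ a u)) with rfl | rfl
  · exact W.exists_gemCore_disjoint_of_f₁_x_mem h₁ h₂ hT4 hT haT htT
  · exact W.swap.exists_gemCore_disjoint_of_f₁_x_mem h₁ h₂ hT4 hT haT htT

end OreWitness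

lemma Is5Ore.hasAvoidingGems {V : Type} {G : SimpleGraph V} (h : Is5Ore G) :
    HasAvoidingGems G := by
  induction h with
  | k5 h => exact h.hasAvoidingGems
  | ore _ _ h ih₁ ih₂ =>
    obtain ⟨x, y, z, f₁, f₂, S, hxy, hS, hSne, hScne, hinter, hunion, hadj⟩ := h
    exact (OreWitness.mk hxy hS hSne hScne hinter hunion hadj).hasAvoidingGems ih₁ ih₂

theorem stmt_7_general {V : Type} (H : SimpleGraph V) (h5 : Is5Ore H) :
    (∀ v : V, (∃ D : Set V, IsDiamond H D ∧ v ∉ D) ∨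
      (∃ S : Set V, IsEmerald H S ∧ v ∉ S)) ∧
    (¬ IsK5 H → ∀ T : Set V, T.ncard = 4 → (∀ a ∈ T, ∀ b ∈ T, a ≠ b → H.Adj a b) →
      (∃ D : Set V, IsDiamond H D ∧ Disjoint D T) ∨
      (∃ S : Set V, IsEmerald H S ∧ Disjoint S T)) := by
  have hH := h5.hasAvoidingGems
  refine ⟨fun v => ?_, fun hK T hT4 hT => ?_⟩
  · obtain ⟨B, K, hBK, hv⟩ := hH.vertex v
    exact hBK.isDiamond_or_isEmerald.imp (⟨B, ·, hv⟩) (⟨B, ·, hv⟩)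
  · obtain ⟨B, K, hBK, hBT⟩ := hH.clique hK T hT4 hT
    exact hBK.isDiamond_or_isEmerald.imp (⟨B, ·, hBT⟩) (⟨B, ·, hBT⟩)

/-- Let `H` be 5-Ore. For any vertex `v`, there is a diamond or emerald of `H` disjoint from
`v`. Moreover, if `H ≠ K₅`, then for any subgraph `T` of `H` isomorphic to `K₄` there is a
diamond or emerald of `H` disjoint from `T`. -/
theorem stmt_7 {V : Type} [Fintype V] (H : SimpleGraph V) (h5 : Is5Ore H) :
    (∀ v : V, (∃ D : Set V, IsDiamond H D ∧ v ∉ D) ∨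
      (∃ S : Set V, IsEmerald H S ∧ v ∉ S)) ∧
    (¬ IsK5 H → ∀ T : Set V, T.ncard = 4 → (∀ a ∈ T, ∀ b ∈ T, a ≠ b → H.Adj a b) →
      (∃ D : Set V, IsDiamond H D ∧ Disjoint D T) ∨
      (∃ S : Set V, IsEmerald H S ∧ Disjoint S T)) :=
  stmt_7_general H h5

end Postle
end

section
/- If R is a collapsible subset of a 5-critical graph G and W is the critical complement of R, then p_G(R) ≥ p(G) − p(W) + 9 + ε − δ, where ε = 1/21 and δ = 8/21. -/
open SimpleGraph

namespace Postle

section Aux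

variable {V : Type} (G : SimpleGraph V) (R : Set V)

lemma bddAbove_ttSet [Fintype V] :
    BddAbove { n : ℕ | ∃ C : Finset (Finset V),
      ((C : Set (Finset V)).Pairwise fun A B => Disjoint A B) ∧
      (∀ W ∈ C, G.IsClique (W : Set V) ∧ (W.card = 3 ∨ W.card = 4)) ∧
      n = ∑ W ∈ C, (W.card - 2) } := by
  classical
  refine ⟨Fintype.card V, fun n hn => ?_⟩
  obtain ⟨C, hd, hc, rfl⟩ := hn
  calc ∑ W ∈ C, (W.card - 2) ≤ ∑ W ∈ C, W.card :=
        Finset.sum_le_sum fun _ _ => Nat.sub_le _ _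
    _ = (C.biUnion id).card :=
        (Finset.card_biUnion fun x hx y hy hxy => hd hx hy hxy).symm
    _ ≤ Fintype.card V := by
        rw [← Finset.card_univ]; exact Finset.card_le_card (Finset.subset_univ _)

lemma le_TT [Fintype V] (C : Finset (Finset V))
    (hd : (C : Set (Finset V)).Pairwise fun A B => Disjoint A B)
    (hc : ∀ W ∈ C, G.IsClique (W : Set V) ∧ (W.card = 3 ∨ W.card = 4)) :
    ∑ W ∈ C, (W.card - 2) ≤ TT G := by
  unfold TT
  exact le_csSup (bddAbove_ttSet G) ⟨C, hd, hc, rfl⟩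

lemma TT_spec [Fintype V] : ∃ C : Finset (Finset V),
    ((C : Set (Finset V)).Pairwise fun A B => Disjoint A B) ∧
    (∀ W ∈ C, G.IsClique (W : Set V) ∧ (W.card = 3 ∨ W.card = 4)) ∧
    TT G = ∑ W ∈ C, (W.card - 2) := by
  unfold TT
  refine Nat.sSup_mem ⟨0, ?_⟩ (bddAbove_ttSet G)
  exact ⟨∅, by simp, by simp, by simp⟩

lemma cc_adj_some_some (w w' : ↥(Rᶜ)) :
    (criticalComplement G R).Adj (some w) (some w') ↔ G.Adj w.1 w'.1 := by
  unfold criticalComplement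
  rw [SimpleGraph.fromRel_adj]
  constructor
  · rintro ⟨-, h | h⟩
    · exact h
    · exact h.symm
  · intro h
    refine ⟨?_, Or.inl h⟩
    intro hc
    rw [Option.some_inj] at hc
    exact h.ne (by rw [hc])

lemma cc_adj_none_some (w : ↥(Rᶜ)) :
    (criticalComplement G R).Adj none (some w) ↔ ∃ x ∈ boundary G R, G.Adj x w.1 := by
  unfold criticalComplement
  rw [SimpleGraph.fromRel_adj]
  constructor
  · rintro ⟨-, h | h⟩
    · exact h
    · exact h.elim
  · intro h
    exact ⟨by simp, Or.inl h⟩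

lemma cc_not_adj_none_none : ¬ (criticalComplement G R).Adj none none :=
  fun h => h.ne rfl

open Classical in
noncomputable def xw (w : ↥(Rᶜ)) : V :=
  if h : ∃ x ∈ boundary G R, G.Adj x w.1 then h.choose else w.1

lemma xw_spec {w : ↥(Rᶜ)} (h : ∃ x ∈ boundary G R, G.Adj x w.1) :
    xw G R w ∈ boundary G R ∧ G.Adj (xw G R w) w.1 := by
  rw [xw, dif_pos h]
  exact ⟨h.choose_spec.1, h.choose_spec.2⟩

lemma xw_memR {w : ↥(Rᶜ)} (h : ∃ x ∈ boundary G R, G.Adj x w.1) :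
    xw G R w ∈ R := (xw_spec G R h).1.1

noncomputable def epushFun (v0 : V) : Option ↥(Rᶜ) → Option ↥(Rᶜ) → Sym2 V
  | some w, some w' => s(w.1, w'.1)
  | none, some w => s(xw G R w, w.1)
  | some w, none => s(xw G R w, w.1)
  | none, none => s(v0, v0)

lemma epushFun_symm (v0 : V) : ∀ a b, epushFun G R v0 a b = epushFun G R v0 b a
  | some _, some _ => Sym2.eq_swap
  | none, some _ => rfl
  | some _, none => rfl
  | none, none => rfl

noncomputable def epush (v0 : V) : Sym2 (Option ↥(Rᶜ)) → Sym2 V :=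
  Sym2.lift ⟨epushFun G R v0, epushFun_symm G R v0⟩

lemma epush_ss (v0 : V) (w w' : ↥(Rᶜ)) :
    epush G R v0 s(some w, some w') = s(w.1, w'.1) := rfl

lemma epush_ns (v0 : V) (w : ↥(Rᶜ)) :
    epush G R v0 s((none : Option ↥(Rᶜ)), some w) = s(xw G R w, w.1) := rfl

lemma epush_sn (v0 : V) (w : ↥(Rᶜ)) :
    epush G R v0 s(some w, (none : Option ↥(Rᶜ))) = s(xw G R w, w.1) := rfl

lemma mem_epush_some (v0 : V) {e : Sym2 (Option ↥(Rᶜ))}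
    (he : e ∈ (criticalComplement G R).edgeSet) (w : ↥(Rᶜ)) :
    w.1 ∈ epush G R v0 e ↔ some w ∈ e := by
  revert he
  induction e using Sym2.ind with
  | _ a b =>
    intro he
    rw [SimpleGraph.mem_edgeSet] at he
    cases a with
    | none =>
      cases b with
      | none => exact absurd he (cc_not_adj_none_none G R)
      | some w₂ =>
        have hxR : xw G R w₂ ∈ R := xw_memR G R ((cc_adj_none_some G R w₂).mp he)
        rw [epush_ns]
        simp only [Sym2.mem_iff]
        constructor
        · rintro (h | h)
          · exact absurd (h ▸ hxR) w.2
          · exact Or.inr (by rw [Option.some_inj]; exact Subtype.ext h)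
        · rintro (h | h)
          · exact absurd h (by simp)
          · rw [Option.some_inj] at h
            exact Or.inr (by rw [h])
    | some w₁ =>
      cases b with
      | none =>
        have hxR : xw G R w₁ ∈ R := xw_memR G R ((cc_adj_none_some G R w₁).mp he.symm)
        rw [epush_sn]
        simp only [Sym2.mem_iff]
        constructor
        · rintro (h | h)
          · exact absurd (h ▸ hxR) w.2
          · exact Or.inl (by rw [Option.some_inj]; exact Subtype.ext h)
        · rintro (h | h)
          · rw [Option.some_inj] at h
            exact Or.inr (by rw [h])
          · exact absurd h (by simp)
      | some w₂ =>
        rw [epush_ss]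
        simp [Sym2.mem_iff, Subtype.ext_iff]

lemma none_mem_epush (v0 : V) {e : Sym2 (Option ↥(Rᶜ))}
    (he : e ∈ (criticalComplement G R).edgeSet) :
    (none ∈ e) ↔ ∃ x ∈ epush G R v0 e, x ∈ R := by
  revert he
  induction e using Sym2.ind with
  | _ a b =>
    intro he
    rw [SimpleGraph.mem_edgeSet] at he
    cases a with
    | none =>
      cases b with
      | none => exact absurd he (cc_not_adj_none_none G R)
      | some w₂ =>
        have hxR : xw G R w₂ ∈ R := xw_memR G R ((cc_adj_none_some G R w₂).mp he)
        rw [epush_ns]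
        constructor
        · intro _
          exact ⟨xw G R w₂, Sym2.mem_mk_left _ _, hxR⟩
        · intro _
          exact Sym2.mem_mk_left _ _
    | some w₁ =>
      cases b with
      | none =>
        have hxR : xw G R w₁ ∈ R := xw_memR G R ((cc_adj_none_some G R w₁).mp he.symm)
        rw [epush_sn]
        constructor
        · intro _
          exact ⟨xw G R w₁, Sym2.mem_mk_left _ _, hxR⟩
        · intro _
          exact Sym2.mem_mk_right _ _
      | some w₂ =>
        rw [epush_ss]
        constructor
        · intro h
          rcases Sym2.mem_iff.mp h with h | h <;> exact absurd h (by simp)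
        · rintro ⟨x, hx, hxR⟩
          rcases Sym2.mem_iff.mp hx with rfl | rfl
          · exact absurd hxR w₁.2
          · exact absurd hxR w₂.2

lemma epush_mem (v0 : V) {e : Sym2 (Option ↥(Rᶜ))}
    (he : e ∈ (criticalComplement G R).edgeSet) :
    epush G R v0 e ∈ G.edgeSet := by
  revert he
  induction e using Sym2.ind with
  | _ a b =>
    intro he
    rw [SimpleGraph.mem_edgeSet] at he
    cases a with
    | none =>
      cases b with
      | none => exact absurd he (cc_not_adj_none_none G R)
      | some w₂ =>
        rw [epush_ns, SimpleGraph.mem_edgeSet]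
        exact (xw_spec G R ((cc_adj_none_some G R w₂).mp he)).2
    | some w₁ =>
      cases b with
      | none =>
        rw [epush_sn, SimpleGraph.mem_edgeSet]
        exact (xw_spec G R ((cc_adj_none_some G R w₁).mp he.symm)).2
      | some w₂ =>
        rw [epush_ss, SimpleGraph.mem_edgeSet]
        exact (cc_adj_some_some G R w₁ w₂).mp he

lemma epush_exists_notR (v0 : V) {e : Sym2 (Option ↥(Rᶜ))}
    (he : e ∈ (criticalComplement G R).edgeSet) :
    ∃ x ∈ epush G R v0 e, x ∉ R := by
  revert he
  induction e using Sym2.ind with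
  | _ a b =>
    intro he
    rw [SimpleGraph.mem_edgeSet] at he
    cases a with
    | none =>
      cases b with
      | none => exact absurd he (cc_not_adj_none_none G R)
      | some w₂ =>
        rw [epush_ns]
        exact ⟨w₂.1, Sym2.mem_mk_right _ _, w₂.2⟩
    | some w₁ =>
      cases b with
      | none =>
        rw [epush_sn]
        exact ⟨w₁.1, Sym2.mem_mk_right _ _, w₁.2⟩
      | some w₂ =>
        rw [epush_ss]
        exact ⟨w₁.1, Sym2.mem_mk_left _ _, w₁.2⟩

lemma epush_injOn (v0 : V) :
    Set.InjOn (epush G R v0) (criticalComplement G R).edgeSet := by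
  intro e he e' he' h
  refine Sym2.ext ?_
  intro x
  cases x with
  | none => rw [none_mem_epush G R v0 he, none_mem_epush G R v0 he', h]
  | some w => rw [← mem_epush_some G R v0 he w, ← mem_epush_some G R v0 he' w, h]

lemma edge_count [Fintype V] (v0 : V) :
    (G.induce R).edgeSet.ncard + (criticalComplement G R).edgeSet.ncard ≤ G.edgeSet.ncard := by
  classical
  set A := Sym2.map (Subtype.val : ↥R → V) '' (G.induce R).edgeSet with hA
  set B := epush G R v0 '' (criticalComplement G R).edgeSet with hB
  have hAcard : A.ncard = (G.induce R).edgeSet.ncard :=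
    Set.ncard_image_of_injective _ (Sym2.map.injective Subtype.val_injective)
  have hBcard : B.ncard = (criticalComplement G R).edgeSet.ncard :=
    Set.ncard_image_of_injOn (epush_injOn G R v0)
  have hAsub : A ⊆ G.edgeSet := by
    rintro e ⟨e₀, he₀, rfl⟩
    revert he₀
    induction e₀ using Sym2.ind with
    | _ a b =>
      intro he₀
      rw [SimpleGraph.mem_edgeSet] at he₀
      rw [Sym2.map_pair_eq, SimpleGraph.mem_edgeSet]
      exact he₀
  have hAR : ∀ e ∈ A, ∀ x ∈ e, x ∈ R := by
    rintro e ⟨e₀, he₀, rfl⟩ x hx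
    revert hx
    induction e₀ using Sym2.ind with
    | _ a b =>
      intro hx
      rw [Sym2.map_pair_eq] at hx
      rcases Sym2.mem_iff.mp hx with rfl | rfl
      · exact a.2
      · exact b.2
  have hBsub : B ⊆ G.edgeSet := by
    rintro e ⟨e₀, he₀, rfl⟩
    exact epush_mem G R v0 he₀
  have hdis : Disjoint A B := by
    rw [Set.disjoint_left]
    rintro e heA ⟨e₀, he₀, rfl⟩
    obtain ⟨x, hx, hxR⟩ := epush_exists_notR G R v0 he₀
    exact hxR (hAR _ heA x hx)
  calc (G.induce R).edgeSet.ncard + (criticalComplement G R).edgeSet.ncard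
      = (A ∪ B).ncard := by
        rw [Set.ncard_union_eq hdis (Set.toFinite A) (Set.toFinite B), hAcard, hBcard]
    _ ≤ G.edgeSet.ncard :=
        Set.ncard_le_ncard (Set.union_subset hAsub hBsub) (Set.toFinite _)

lemma tt_ineq [Fintype V] :
    TT (G.induce R) + TT (criticalComplement G R) ≤ TT G + 1 := by
  classical
  obtain ⟨CR, hRd, hRc, hReq⟩ := TT_spec (G.induce R)
  obtain ⟨CW, hWd, hWc, hWeq⟩ := TT_spec (criticalComplement G R)
  set embR : ↥R ↪ V := ⟨Subtype.val, Subtype.val_injective⟩ with hembR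
  set embC : ↥(Rᶜ) ↪ V := ⟨Subtype.val, Subtype.val_injective⟩ with hembC
  set cnv : Finset (Option ↥(Rᶜ)) → Finset V := fun K => K.eraseNone.map embC with hcnvdef
  have hcnvmem : ∀ (K : Finset (Option ↥(Rᶜ))) (v : V),
      v ∈ cnv K ↔ ∃ w : ↥(Rᶜ), some w ∈ K ∧ w.1 = v := by
    intro K v
    simp [hcnvdef, Finset.mem_map, Finset.mem_eraseNone, hembC]
  have hcnvcard : ∀ K : Finset (Option ↥(Rᶜ)), (cnv K).card = (K.erase none).card := by
    intro K
    rw [hcnvdef]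
    simp only
    rw [Finset.card_map, ← Finset.map_some_eraseNone K, Finset.card_map]
  have hcardnone : ∀ K : Finset (Option ↥(Rᶜ)), none ∈ K → (cnv K).card = K.card - 1 := by
    intro K h; rw [hcnvcard, Finset.card_erase_of_mem h]
  have hcardnonone : ∀ K : Finset (Option ↥(Rᶜ)), none ∉ K → (cnv K).card = K.card := by
    intro K h; rw [hcnvcard, Finset.erase_eq_of_notMem h]
  set CW2 : Finset (Finset (Option ↥(Rᶜ))) := CW.filter (fun K => 3 ≤ (cnv K).card) with hCW2
  set CG : Finset (Finset V) := CR.image (fun K => K.map embR) ∪ CW2.image cnv with hCG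
  have hRsub : ∀ K : Finset ↥R, ∀ v ∈ K.map embR, v ∈ R := by
    intro K v hv
    rw [Finset.mem_map] at hv
    obtain ⟨a, _, rfl⟩ := hv
    exact a.2
  have hCsub : ∀ K, ∀ v ∈ cnv K, v ∉ R := by
    intro K v hv
    rw [hcnvmem] at hv
    obtain ⟨w, _, rfl⟩ := hv
    exact w.2
  have hcnvdis : ∀ K₁ K₂, Disjoint K₁ K₂ → Disjoint (cnv K₁) (cnv K₂) := by
    intro K₁ K₂ h
    rw [Finset.disjoint_left]
    intro v h1 h2
    rw [hcnvmem] at h1 h2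
    obtain ⟨w₁, hw₁, rfl⟩ := h1
    obtain ⟨w₂, hw₂, hw⟩ := h2
    have hww : w₂ = w₁ := Subtype.ext hw
    subst hww
    exact Finset.disjoint_left.mp h hw₁ hw₂
  have hCGc : ∀ A ∈ CG, G.IsClique (A : Set V) ∧ (A.card = 3 ∨ A.card = 4) := by
    intro A hA
    rw [hCG, Finset.mem_union] at hA
    rcases hA with hA | hA
    · rw [Finset.mem_image] at hA
      obtain ⟨K, hK, rfl⟩ := hA
      obtain ⟨hKc, hKcard⟩ := hRc K hK
      constructor
      · intro a ha b hb hab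
        rw [Finset.mem_coe, Finset.mem_map] at ha hb
        obtain ⟨a', ha', rfl⟩ := ha
        obtain ⟨b', hb', rfl⟩ := hb
        have hne : a' ≠ b' := fun h => hab (by rw [h])
        exact hKc (Finset.mem_coe.mpr ha') (Finset.mem_coe.mpr hb') hne
      · rw [Finset.card_map]; exact hKcard
    · rw [Finset.mem_image] at hA
      obtain ⟨K, hK, rfl⟩ := hA
      rw [hCW2, Finset.mem_filter] at hK
      obtain ⟨hKmem, hK3⟩ := hK
      obtain ⟨hKc, hKcard⟩ := hWc K hKmem
      constructor
      · intro a ha b hb hab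
        rw [Finset.mem_coe, hcnvmem] at ha hb
        obtain ⟨w₁, hw₁, rfl⟩ := ha
        obtain ⟨w₂, hw₂, rfl⟩ := hb
        have hne : (some w₁ : Option ↥(Rᶜ)) ≠ some w₂ := by
          intro h
          rw [Option.some_inj] at h
          exact hab (by rw [h])
        have hadj := hKc (Finset.mem_coe.mpr hw₁) (Finset.mem_coe.mpr hw₂) hne
        exact (cc_adj_some_some G R w₁ w₂).mp hadj
      · have h1 : (cnv K).card ≤ K.card := by
          rw [hcnvcard]
          exact Finset.card_le_card (Finset.erase_subset _ _)
        rcases hKcard with h | h <;> omega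
  have hCGd : ((CG : Set (Finset V)).Pairwise fun A B => Disjoint A B) := by
    have cross : ∀ A' B' : Finset V, A' ∈ CR.image (fun K => K.map embR) →
        B' ∈ CW2.image cnv → Disjoint A' B' := by
      intro A' B' hA' hB'
      rw [Finset.mem_image] at hA' hB'
      obtain ⟨K₁, _, rfl⟩ := hA'
      obtain ⟨K₂, _, rfl⟩ := hB'
      rw [Finset.disjoint_left]
      intro v hv1 hv2
      exact hCsub K₂ v hv2 (hRsub K₁ v hv1)
    intro A hA B hB hAB
    rw [Finset.mem_coe, hCG, Finset.mem_union] at hA hB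
    rcases hA with hA | hA <;> rcases hB with hB | hB
    · rw [Finset.mem_image] at hA hB
      obtain ⟨K₁, hK₁, rfl⟩ := hA
      obtain ⟨K₂, hK₂, rfl⟩ := hB
      have hK : K₁ ≠ K₂ := fun h => hAB (by rw [h])
      have hd := hRd (Finset.mem_coe.mpr hK₁) (Finset.mem_coe.mpr hK₂) hK
      exact (Finset.disjoint_map embR).mpr hd
    · exact cross _ _ hA hB
    · exact (cross _ _ hB hA).symm
    · rw [Finset.mem_image] at hA hB
      obtain ⟨K₁, hK₁, rfl⟩ := hA
      obtain ⟨K₂, hK₂, rfl⟩ := hB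
      have hK : K₁ ≠ K₂ := fun h => hAB (by rw [h])
      rw [hCW2, Finset.mem_filter] at hK₁ hK₂
      exact hcnvdis _ _ (hWd (Finset.mem_coe.mpr hK₁.1) (Finset.mem_coe.mpr hK₂.1) hK)
  have hdisUnion : Disjoint (CR.image (fun K => K.map embR)) (CW2.image cnv) := by
    rw [Finset.disjoint_left]
    intro A hA hB
    rw [Finset.mem_image] at hA hB
    obtain ⟨K₁, hK₁, rfl⟩ := hA
    obtain ⟨K₂, hK₂, hcnveq⟩ := hB
    obtain ⟨hKc, hKcard⟩ := hRc K₁ hK₁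
    have hne : (K₁.map embR).Nonempty := by
      rw [← Finset.card_pos, Finset.card_map]
      omega
    obtain ⟨v, hv⟩ := hne
    exact hCsub K₂ v (by rw [hcnveq]; exact hv) (hRsub K₁ v hv)
  have hinjR : ∀ K₁ ∈ CR, ∀ K₂ ∈ CR, K₁.map embR = K₂.map embR → K₁ = K₂ := by
    intro K₁ _ K₂ _ h
    exact Finset.map_injective embR h
  have hinjW : ∀ K₁ ∈ CW2, ∀ K₂ ∈ CW2, cnv K₁ = cnv K₂ → K₁ = K₂ := by
    intro K₁ h₁ K₂ h₂ h
    by_contra hne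
    rw [hCW2, Finset.mem_filter] at h₁ h₂
    have hd := hWd (Finset.mem_coe.mpr h₁.1) (Finset.mem_coe.mpr h₂.1) hne
    have hdc := hcnvdis _ _ hd
    have h3 := h₁.2
    have hno : (cnv K₁).Nonempty := by
      rw [← Finset.card_pos]
      omega
    obtain ⟨v, hv⟩ := hno
    exact Finset.disjoint_left.mp hdc hv (by rw [← h]; exact hv)
  have hsum : ∑ A ∈ CG, (A.card - 2)
      = ∑ K ∈ CR, (K.card - 2) + ∑ K ∈ CW2, ((cnv K).card - 2) := by
    rw [hCG, Finset.sum_union hdisUnion, Finset.sum_image hinjR, Finset.sum_image hinjW]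
    simp [Finset.card_map]
  have hW2sum : ∑ K ∈ CW, (K.card - 2) ≤ ∑ K ∈ CW2, ((cnv K).card - 2) + 1 := by
    by_cases hex : ∃ K₀ ∈ CW, none ∈ K₀
    · obtain ⟨K₀, hK₀, hn₀⟩ := hex
      have huniq : ∀ K ∈ CW, K ≠ K₀ → none ∉ K := by
        intro K hK hne hn
        have hd := hWd (Finset.mem_coe.mpr hK) (Finset.mem_coe.mpr hK₀) hne
        exact Finset.disjoint_left.mp hd hn hn₀
      have hK₀card := (hWc K₀ hK₀).2
      have hstep : ∀ K ∈ CW.erase K₀, ((cnv K).card - 2) = (K.card - 2) := by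
        intro K hK
        rw [Finset.mem_erase] at hK
        rw [hcardnonone K (huniq K hK.2 hK.1)]
      rw [← Finset.sum_erase_add CW _ hK₀]
      by_cases h4 : K₀.card = 4
      · have hK₀CW2 : K₀ ∈ CW2 := by
          rw [hCW2, Finset.mem_filter]
          refine ⟨hK₀, ?_⟩
          rw [hcardnone K₀ hn₀]
          omega
        rw [← Finset.sum_erase_add CW2 _ hK₀CW2]
        have herase : CW2.erase K₀ = CW.erase K₀ := by
          ext K
          rw [Finset.mem_erase, Finset.mem_erase, hCW2, Finset.mem_filter]
          constructor
          · rintro ⟨h1, h2, _⟩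
            exact ⟨h1, h2⟩
          · rintro ⟨h1, h2⟩
            refine ⟨h1, h2, ?_⟩
            have h3 := hcardnonone K (huniq K h2 h1)
            have h5 := (hWc K h2).2
            omega
        rw [herase, Finset.sum_congr rfl hstep]
        have h6 : (cnv K₀).card = 3 := by
          rw [hcardnone K₀ hn₀]
          omega
        omega
      · have h3 : K₀.card = 3 := by
          rcases hK₀card with h | h
          · exact h
          · exact absurd h h4
        have hss : CW.erase K₀ ⊆ CW2 := by
          intro K hK
          rw [Finset.mem_erase] at hK
          rw [hCW2, Finset.mem_filter]
          refine ⟨hK.2, ?_⟩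
          have h5 := hcardnonone K (huniq K hK.2 hK.1)
          have h6 := (hWc K hK.2).2
          omega
        have hle2 : ∑ K ∈ CW.erase K₀, (K.card - 2) ≤ ∑ K ∈ CW2, ((cnv K).card - 2) := by
          calc ∑ K ∈ CW.erase K₀, (K.card - 2)
              = ∑ K ∈ CW.erase K₀, ((cnv K).card - 2) := (Finset.sum_congr rfl hstep).symm
            _ ≤ ∑ K ∈ CW2, ((cnv K).card - 2) := Finset.sum_le_sum_of_subset hss
        omega
    · push_neg at hex
      have hCW2eq : CW2 = CW := by
        ext K
        rw [hCW2, Finset.mem_filter]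
        constructor
        · exact fun h => h.1
        · intro h
          refine ⟨h, ?_⟩
          rw [hcardnonone K (hex K h)]
          have h5 := (hWc K h).2
          omega
      rw [hCW2eq, Finset.sum_congr rfl
        (fun K hK => by rw [hcardnonone K (hex K hK)] : ∀ K ∈ CW, ((cnv K).card - 2) = (K.card - 2))]
      omega
  have hle := le_TT G CG hCGd hCGc
  rw [hReq, hWeq]
  omega

end Aux

/-- If `R` is a collapsible subset of a 5-critical graph `G` and `W` is the critical
complement of `R`, then `p_G(R) ≥ p(G) - p(W) + 9 + ε - δ`. -/
theorem stmt_10 {V : Type} [Fintype V] (G : SimpleGraph V) (hG : FiveCritical G)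
    (R : Set V) (hR : Collapsible G R) :
    potOn G R ≥ pot G - pot (criticalComplement G R) + 9 + epsC - delC := by
  classical
  obtain ⟨-, hR5, -⟩ := hR
  have hRne : R.Nonempty := by
    rw [← Set.ncard_pos]
    omega
  obtain ⟨v0, hv0⟩ := hRne
  have hcard : R.ncard + Rᶜ.ncard = Nat.card V := Set.ncard_add_ncard_compl R
  have hedge := edge_count G R v0
  have htt := tt_ineq G R
  unfold potOn pot
  rw [Finite.card_option, Nat.card_coe_set_eq, Nat.card_coe_set_eq]
  have h1 : ((G.induce R).edgeSet.ncard : ℝ) + ((criticalComplement G R).edgeSet.ncard : ℝ)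
      ≤ (G.edgeSet.ncard : ℝ) := by exact_mod_cast hedge
  have h2 : (TT (G.induce R) : ℝ) + (TT (criticalComplement G R) : ℝ) ≤ (TT G : ℝ) + 1 := by
    exact_mod_cast htt
  have h3 : (R.ncard : ℝ) + (Rᶜ.ncard : ℝ) = (Nat.card V : ℝ) := by exact_mod_cast hcard
  unfold epsC delC
  push_cast
  linarith


end Postle
end

section
/- If G is a 5-Ore graph and R ⊊ V(G) with |R| ≥ 5 and p_KY(R) < 12, then R is a collapsible subset of G and p_KY(R) = 9. -/
/-!
The proof is an induction along the Ore construction with a stronger hypothesis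
(`OreInvariant`): `G` is not 4-colourable, `p_KY(G) = 5`, and every nonempty proper `R` with
`p_KY(R) < 12` has potential 9 and a boundary that is monochromatic in every 4-colouring of
`G[R]`. In `K₅` only singletons qualify, as sets of 2, 3 or 4 vertices have potential ≥ 12.

For an Ore composition of `G₁` (edge `xy` deleted) and `G₂` (vertex `z` split), let `R₁`, `R₂`
be the parts of `R` in `G₁` and in `G₂ - z`, and `t` the number of vertices of `R₂` attached to
`y`. Counting edges, `p(R)` is `p₁(R₁) + p₂(R₂)` if `x, y ∉ R`, `p₁(R₁) + p₂(R₂ + z) - 9 + 4t`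
if only `x ∈ R`, and `p₁(R₁) + p₂(R₂ + z) - 5` if `x, y ∈ R`. Nonempty proper parts have
potential ≥ 9 and whole graphs potential 5, so `p(R) < 12` forces `p(R) = 9`, `t ≤ 1` and
potential 9 on every part that is neither empty nor everything. The monochromatic boundaries of
these parts transfer to `G`: a colouring of `G[R]` read on `G₁` is proper unless `x` and `y` get
the same colour, and read on `G₂` with `z` coloured as `x` it is proper unless `x` shares its
colour with a vertex attached to `y`. When a side lies entirely inside `R`, its
non-4-colourability forces exactly these coincidences.
-/

open SimpleGraph

namespace Postle

section Counting

variable {α : Type} (G : SimpleGraph α)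

noncomputable def numEdgesIn (R : Set α) : ℕ := (G.edgeSet ∩ R.sym2).ncard

noncomputable def numEdgesBetween (P Q : Set α) : ℕ :=
  {e : Sym2 α | ∃ p ∈ P, ∃ q ∈ Q, G.Adj p q ∧ e = s(p, q)}.ncard

theorem ncard_edgeSet_induce (R : Set α) :
    (G.induce R).edgeSet.ncard = numEdgesIn G R := by
  rw [numEdgesIn, ← Set.ncard_image_of_injective _ (Sym2.map.injective Subtype.val_injective)]
  congr 1
  ext e
  induction e using Sym2.ind with
  | h a b =>
    constructor
    · rintro ⟨e, he, hmap⟩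
      induction e using Sym2.ind with
      | h a' b' =>
        rcases Sym2.eq_iff.mp hmap with ⟨rfl, rfl⟩ | ⟨rfl, rfl⟩
        exacts [⟨he, a'.2, b'.2⟩, ⟨he.symm, b'.2, a'.2⟩]
    · rintro ⟨he, ha, hb⟩
      exact ⟨s(⟨a, ha⟩, ⟨b, hb⟩), he, rfl⟩

theorem potKYOn_eq (R : Set α) :
    potKYOn G R = 9 * (R.ncard : ℝ) - 4 * (numEdgesIn G R : ℝ) := by
  rw [potKYOn, potKY, ncard_edgeSet_induce, Nat.card_coe_set_eq]

theorem numEdgesIn_univ : numEdgesIn G Set.univ = G.edgeSet.ncard := by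
  simp [numEdgesIn]

theorem potKYOn_univ [Finite α] : potKYOn G Set.univ = potKY G := by
  rw [potKYOn_eq, numEdgesIn_univ, Set.ncard_univ, potKY]

theorem numEdgesIn_singleton (v : α) : numEdgesIn G {v} = 0 := by
  simp [numEdgesIn]

theorem potKYOn_singleton (v : α) : potKYOn G {v} = 9 := by
  rw [potKYOn_eq, numEdgesIn_singleton, Set.ncard_singleton]
  norm_num

theorem numEdgesIn_le_choose [Finite α] (R : Set α) : numEdgesIn G R ≤ R.ncard.choose 2 := by
  classical
  have : Fintype α := Fintype.ofFinite α
  rw [← ncard_edgeSet_induce, Set.ncard_eq_toFinset_card']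
  have h := card_edgeFinset_le_card_choose_two (G := G.induce R)
  rw [edgeFinset] at h
  convert h using 2
  rw [Set.ncard_eq_toFinset_card', Set.toFinset_card]

theorem twelve_le_potKYOn [Finite α] {R : Set α} (h2 : 2 ≤ R.ncard) (h4 : R.ncard ≤ 4) :
    12 ≤ potKYOn G R := by
  have hE := numEdgesIn_le_choose G R
  have key : 4 * numEdgesIn G R + 12 ≤ 9 * R.ncard := by
    interval_cases R.ncard <;> simp [Nat.choose] at hE <;> omega
  rw [potKYOn_eq]
  have : (4 * numEdgesIn G R + 12 : ℝ) ≤ 9 * R.ncard := by exact_mod_cast key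
  linarith

theorem edgeSet_inter_sym2_union {P Q : Set α} :
    G.edgeSet ∩ (P ∪ Q).sym2 = (G.edgeSet ∩ P.sym2 ∪ G.edgeSet ∩ Q.sym2) ∪
      {e : Sym2 α | ∃ p ∈ P, ∃ q ∈ Q, G.Adj p q ∧ e = s(p, q)} := by
  ext e
  induction e using Sym2.ind with
  | h a b =>
    simp only [Set.mem_inter_iff, Set.mem_union, mem_edgeSet, Set.mk_mem_sym2_iff,
      Set.mem_ofPred_eq, Sym2.eq_iff]
    constructor
    · rintro ⟨hab, ha | ha, hb | hb⟩
      · exact Or.inl (Or.inl ⟨hab, ha, hb⟩)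
      · exact Or.inr ⟨a, ha, b, hb, hab, Or.inl ⟨rfl, rfl⟩⟩
      · exact Or.inr ⟨b, hb, a, ha, hab.symm, Or.inr ⟨rfl, rfl⟩⟩
      · exact Or.inl (Or.inr ⟨hab, ha, hb⟩)
    · rintro ((⟨hab, ha, hb⟩ | ⟨hab, ha, hb⟩) | ⟨p, hp, q, hq, hpq, ⟨rfl, rfl⟩ | ⟨rfl, rfl⟩⟩)
      exacts [⟨hab, .inl ha, .inl hb⟩, ⟨hab, .inr ha, .inr hb⟩, ⟨hpq, .inl hp, .inr hq⟩,
        ⟨hpq.symm, .inr hq, .inl hp⟩]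

theorem numEdgesIn_union [Finite α] {P Q : Set α} (h : Disjoint P Q) :
    numEdgesIn G (P ∪ Q) = numEdgesIn G P + numEdgesIn G Q + numEdgesBetween G P Q := by
  have hPQ : Disjoint P.sym2 Q.sym2 := by
    refine Set.disjoint_left.mpr fun e hP hQ => ?_
    induction e using Sym2.ind with
    | h a b => exact Set.disjoint_left.mp h hP.1 hQ.1
  have hcross : Disjoint (G.edgeSet ∩ P.sym2 ∪ G.edgeSet ∩ Q.sym2)
      {e : Sym2 α | ∃ p ∈ P, ∃ q ∈ Q, G.Adj p q ∧ e = s(p, q)} := by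
    rw [Set.disjoint_left]
    rintro e (⟨-, hv⟩ | ⟨-, hv⟩) ⟨p, hp, q, hq, -, rfl⟩
    · exact Set.disjoint_left.mp h hv.2 hq
    · exact Set.disjoint_left.mp h hp hv.1
  rw [numEdgesIn, edgeSet_inter_sym2_union, Set.ncard_union_eq hcross,
    Set.ncard_union_eq (hPQ.mono Set.inter_subset_right Set.inter_subset_right)]
  rfl

theorem numEdgesBetween_of_subset {P P' Q : Set α} (hsub : P' ⊆ P)
    (h : ∀ p ∈ P, ∀ q ∈ Q, G.Adj p q → p ∈ P') :
    numEdgesBetween G P Q = numEdgesBetween G P' Q := by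
  unfold numEdgesBetween
  congr 1
  ext e
  constructor
  · rintro ⟨p, hp, q, hq, hpq, rfl⟩
    exact ⟨p, h p hp q hq hpq, q, hq, hpq, rfl⟩
  · rintro ⟨p, hp, q, hq, hpq, rfl⟩
    exact ⟨p, hsub hp, q, hq, hpq, rfl⟩

theorem numEdgesBetween_empty (Q : Set α) : numEdgesBetween G ∅ Q = 0 := by
  simp [numEdgesBetween]

theorem numEdgesBetween_singleton {Q : Set α} {u : α} (hu : u ∉ Q) :
    numEdgesBetween G {u} Q = (G.neighborSet u ∩ Q).ncard := by
  have heq : {e : Sym2 α | ∃ p ∈ ({u} : Set α), ∃ q ∈ Q, G.Adj p q ∧ e = s(p, q)} =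
      (fun q => s(u, q)) '' (G.neighborSet u ∩ Q) := by
    ext e
    simp only [Set.mem_ofPred_eq, Set.mem_image, Set.mem_inter_iff, mem_neighborSet,
      Set.mem_singleton_iff, exists_eq_left]
    exact ⟨fun ⟨q, hq, huq, he⟩ => ⟨q, ⟨huq, hq⟩, he.symm⟩,
      fun ⟨q, ⟨huq, hq⟩, he⟩ => ⟨q, hq, huq, he.symm⟩⟩
  rw [numEdgesBetween, heq]
  refine Set.InjOn.ncard_image fun q ⟨_, hq⟩ q' ⟨_, hq'⟩ hqq' => ?_
  rcases Sym2.eq_iff.mp hqq' with ⟨-, h⟩ | ⟨h, -⟩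
  · exact h
  · exact absurd (h ▸ hq') hu

theorem numEdgesBetween_union_left [Finite α] {P₁ P₂ Q : Set α}
    (h₁₂ : Disjoint P₁ P₂) (hQ : Disjoint (P₁ ∪ P₂) Q) :
    numEdgesBetween G (P₁ ∪ P₂) Q = numEdgesBetween G P₁ Q + numEdgesBetween G P₂ Q := by
  unfold numEdgesBetween
  rw [← Set.ncard_union_eq]
  · congr 1
    ext e
    simp only [Set.mem_ofPred_eq, Set.mem_union]
    constructor
    · rintro ⟨p, hp | hp, q, hq, hpq, rfl⟩
      exacts [Or.inl ⟨p, hp, q, hq, hpq, rfl⟩, Or.inr ⟨p, hp, q, hq, hpq, rfl⟩]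
    · rintro (⟨p, hp, q, hq, hpq, rfl⟩ | ⟨p, hp, q, hq, hpq, rfl⟩)
      exacts [⟨p, Or.inl hp, q, hq, hpq, rfl⟩, ⟨p, Or.inr hp, q, hq, hpq, rfl⟩]
  · rw [Set.disjoint_left]
    rintro e ⟨p, hp, q, hq, -, rfl⟩ ⟨p', hp', q', hq', -, hee⟩
    rcases Sym2.eq_iff.mp hee with ⟨h, -⟩ | ⟨h, -⟩
    · exact Set.disjoint_left.mp h₁₂ hp (h ▸ hp')
    · exact Set.disjoint_left.mp hQ (Or.inl hp) (h ▸ hq')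

theorem numEdgesIn_insert [Finite α] {Q : Set α} {v : α} (hv : v ∉ Q) :
    numEdgesIn G (insert v Q) = numEdgesIn G Q + (G.neighborSet v ∩ Q).ncard := by
  rw [Set.insert_eq, numEdgesIn_union G (Set.disjoint_singleton_left.mpr hv),
    numEdgesIn_singleton, numEdgesBetween_singleton G hv, zero_add]

end Counting

section Monochromatic

variable {α β : Type} {G : SimpleGraph α} {R U U' : Set α}

open Classical in
/-- A colouring of `G[R]` read as a function on all of `α`, with the junk value `0` off `R`. -/
noncomputable def ambientColor (φ : (G.induce R).Coloring (Fin 4)) (v : α) : Fin 4 :=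
  if h : v ∈ R then φ ⟨v, h⟩ else 0

theorem ambientColor_of_mem (φ : (G.induce R).Coloring (Fin 4)) {v : α} (hv : v ∈ R) :
    ambientColor φ v = φ ⟨v, hv⟩ := by
  simp [ambientColor, hv]

theorem ambientColor_ne_of_adj (φ : (G.induce R).Coloring (Fin 4)) {u v : α} (hu : u ∈ R)
    (hv : v ∈ R) (huv : G.Adj u v) : ambientColor φ u ≠ ambientColor φ v := by
  rw [ambientColor_of_mem φ hu, ambientColor_of_mem φ hv]
  exact φ.valid (G := G.induce R) huv

def Monochromatic (G : SimpleGraph α) (R U : Set α) : Prop :=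
  ∀ φ : (G.induce R).Coloring (Fin 4), ∀ u ∈ U ∩ R, ∀ v ∈ U ∩ R,
    ambientColor φ u = ambientColor φ v

theorem Monochromatic.subset (h : Monochromatic G R U) (hU : U' ⊆ U) : Monochromatic G R U' :=
  fun φ u hu v hv => h φ u ⟨hU hu.1, hu.2⟩ v ⟨hU hv.1, hv.2⟩

theorem Monochromatic.union (h : Monochromatic G R U) (h' : Monochromatic G R U') {w : α}
    (hw : w ∈ U ∩ R) (hw' : w ∈ U' ∩ R) : Monochromatic G R (U ∪ U') := by
  have key : ∀ φ : (G.induce R).Coloring (Fin 4), ∀ u ∈ (U ∪ U') ∩ R,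
      ambientColor φ u = ambientColor φ w := by
    rintro φ u ⟨hu | hu, huR⟩
    exacts [h φ u ⟨hu, huR⟩ w hw, h' φ u ⟨hu, huR⟩ w hw']
  exact fun φ u hu v hv => (key φ u hu).trans (key φ v hv).symm

theorem monochromatic_of_subsingleton (hR : R.Subsingleton) : Monochromatic G R U :=
  fun _ _ hu _ hv => congrArg _ (hR hu.2 hv.2)

theorem monochromatic_pair {a b : α}
    (h : ∀ φ : (G.induce R).Coloring (Fin 4), ambientColor φ a = ambientColor φ b) :
    Monochromatic G R {a, b} := by
  have key : ∀ φ : (G.induce R).Coloring (Fin 4), ∀ u ∈ ({a, b} : Set α) ∩ R,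
      ambientColor φ u = ambientColor φ a := by
    rintro φ u ⟨rfl | rfl, -⟩
    exacts [rfl, (h φ).symm]
  exact fun φ u hu v hv => (key φ u hu).trans (key φ v hv).symm

theorem Monochromatic.image {H : SimpleGraph β} {Q W : Set β} (g : β → α)
    (hproper : ∀ φ : (G.induce R).Coloring (Fin 4), ∀ a ∈ Q, ∀ b ∈ Q,
      H.Adj a b → ambientColor φ (g a) ≠ ambientColor φ (g b))
    (hW : Monochromatic H Q W) (hWQ : W ⊆ Q) : Monochromatic G R (g '' W) := by
  rintro φ - ⟨⟨a, haW, rfl⟩, -⟩ - ⟨⟨b, hbW, rfl⟩, -⟩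
  let ψ : (H.induce Q).Coloring (Fin 4) :=
    Coloring.mk (fun c => ambientColor φ (g c)) fun {c c'} h => hproper φ c c.2 c' c'.2 h
  have hψ : ∀ c ∈ Q, ambientColor ψ c = ambientColor φ (g c) :=
    fun c hc => ambientColor_of_mem ψ hc
  rw [← hψ a (hWQ haW), ← hψ b (hWQ hbW)]
  exact hW ψ a ⟨haW, hWQ haW⟩ b ⟨hbW, hWQ hbW⟩

theorem boundary_subset (G : SimpleGraph α) (R : Set α) : boundary G R ⊆ R :=
  fun _ hv => hv.1

theorem boundary_univ (G : SimpleGraph α) : boundary G Set.univ = ∅ :=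
  Set.eq_empty_of_forall_notMem fun _ ⟨_, _, hw, _⟩ => hw trivial

end Monochromatic

section Invariant

variable {α : Type}

def NineCollapsible (G : SimpleGraph α) (R : Set α) : Prop :=
  potKYOn G R = 9 ∧ Monochromatic G R (boundary G R)

structure OreInvariant (G : SimpleGraph α) : Prop where
  finite : Finite α
  potKY_eq : potKY G = 5
  not_colorable : ¬ G.Colorable 4
  nineCollapsible : ∀ R : Set α, R.Nonempty → R ≠ Set.univ → potKYOn G R < 12 →
    NineCollapsible G R

variable {G : SimpleGraph α}

theorem OreInvariant.nine_le_potKYOn (hG : OreInvariant G) {R : Set α} (hne : R.Nonempty)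
    (hR : R ≠ Set.univ) : 9 ≤ potKYOn G R := by
  by_contra! hp
  linarith [(hG.nineCollapsible R hne hR (by linarith)).1]

theorem oreInvariant_of_isK5 (h : IsK5 G) : OreInvariant G := by
  obtain ⟨e⟩ := h
  have : Finite α := Finite.of_equiv _ e.toEquiv.symm
  have hcard : Nat.card α = 5 := by
    rw [Nat.card_congr e.toEquiv, Nat.card_eq_fintype_card, Fintype.card_fin]
  have hedge : G.edgeSet.ncard = 10 := by
    rw [← Nat.card_coe_set_eq, Nat.card_congr e.mapEdgeSet, Nat.card_coe_set_eq,
      Set.ncard_eq_toFinset_card', ← edgeFinset, card_edgeFinset_top_eq_card_choose_two]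
    rfl
  refine ⟨this, ?_, ?_, ?_⟩
  · rw [potKY, hcard, hedge]
    norm_num
  · exact fun hc => e.symm.toEmbedding.isContained.not_cliqueFree (hc.cliqueFree (by norm_num))
  · intro R hne hR hp
    have hlt : R.ncard < 5 := by
      simpa [hcard] using Set.ncard_lt_ncard (Set.ssubset_univ_iff.mpr hR) Set.finite_univ
    have h1 : R.ncard = 1 := by
      by_contra h1
      have := twelve_le_potKYOn G (R := R) (by have := hne.ncard_pos; omega) (by omega)
      linarith
    obtain ⟨v, rfl⟩ := Set.ncard_eq_one.mp h1
    exact ⟨potKYOn_singleton G v, monochromatic_of_subsingleton Set.subsingleton_singleton⟩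

end Invariant

section OreComposition

variable {V V₁ V₂ : Type}

structure OreData (G : SimpleGraph V) (G₁ : SimpleGraph V₁) (G₂ : SimpleGraph V₂) where
  x : V₁
  y : V₁
  z : V₂
  f₁ : V₁ ↪ V
  f₂ : {w : V₂ // w ≠ z} ↪ V
  S : Set V₂
  adj_xy : G₁.Adj x y
  adj_z_of_mem_S : ∀ w ∈ S, G₂.Adj z w
  S_nonempty : S.Nonempty
  nonempty_neighborSet_diff_S : (G₂.neighborSet z \ S).Nonempty
  disjoint_range : Set.range ⇑f₁ ∩ Set.range ⇑f₂ = ∅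
  range_union_range : Set.range ⇑f₁ ∪ Set.range ⇑f₂ = Set.univ
  adj_iff : ∀ a b : V, G.Adj a b ↔
      ((∃ a' b' : V₁, f₁ a' = a ∧ f₁ b' = b ∧ G₁.Adj a' b' ∧
          ¬(a' = x ∧ b' = y) ∧ ¬(a' = y ∧ b' = x)) ∨
       (∃ a' b' : {w : V₂ // w ≠ z}, f₂ a' = a ∧ f₂ b' = b ∧ G₂.Adj a'.1 b'.1) ∨
       (∃ w : {w : V₂ // w ≠ z}, G₂.Adj z w.1 ∧
         ((((a = f₁ x ∧ b = f₂ w) ∨ (b = f₁ x ∧ a = f₂ w)) ∧ w.1 ∈ S) ∨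
          (((a = f₁ y ∧ b = f₂ w) ∨ (b = f₁ y ∧ a = f₂ w)) ∧ w.1 ∉ S))))

variable {G : SimpleGraph V} {G₁ : SimpleGraph V₁} {G₂ : SimpleGraph V₂}

theorem IsOreComposition.nonempty_oreData (h : IsOreComposition G G₁ G₂) :
    Nonempty (OreData G G₁ G₂) := by
  obtain ⟨x, y, z, f₁, f₂, S, h₁, h₂, h₃, h₄, h₅, h₆, h₇⟩ := h
  exact ⟨⟨x, y, z, f₁, f₂, S, h₁, h₂, h₃, h₄, h₅, h₆, h₇⟩⟩

namespace OreData

variable (d : OreData G G₁ G₂) {R : Set V}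

theorem f₁_ne_f₂ (a : V₁) (b : {w : V₂ // w ≠ d.z}) : d.f₁ a ≠ d.f₂ b := fun h => by
  have : d.f₁ a ∈ Set.range ⇑d.f₁ ∩ Set.range ⇑d.f₂ := ⟨⟨a, rfl⟩, ⟨b, h.symm⟩⟩
  rwa [d.disjoint_range] at this

theorem x_ne_y : d.x ≠ d.y := d.adj_xy.ne

theorem exists_eq_f₁_or_f₂ (v : V) : (∃ a, d.f₁ a = v) ∨ ∃ b, d.f₂ b = v := by
  simpa [← d.range_union_range] using Set.mem_univ v

theorem f₁_adj_f₁_iff {a b : V₁} : G.Adj (d.f₁ a) (d.f₁ b) ↔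
    (G₁.Adj a b ∧ ¬(a = d.x ∧ b = d.y) ∧ ¬(a = d.y ∧ b = d.x)) := by
  rw [d.adj_iff]
  constructor
  · rintro (⟨a', b', ha, hb, h⟩ | ⟨a', b', ha, hb, h⟩ | ⟨w, hw, h⟩)
    · rwa [d.f₁.injective ha, d.f₁.injective hb] at h
    · exact absurd hb.symm (d.f₁_ne_f₂ b b')
    · rcases h with ⟨(⟨h₁, h₂⟩ | ⟨h₁, h₂⟩), _⟩ | ⟨(⟨h₁, h₂⟩ | ⟨h₁, h₂⟩), _⟩ <;>
        exact absurd h₂ (d.f₁_ne_f₂ _ _)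
  · exact fun h => Or.inl ⟨a, b, rfl, rfl, h⟩

theorem f₂_adj_f₂_iff {a b : {w : V₂ // w ≠ d.z}} :
    G.Adj (d.f₂ a) (d.f₂ b) ↔ G₂.Adj a.1 b.1 := by
  rw [d.adj_iff]
  constructor
  · rintro (⟨a', b', ha, hb, h⟩ | ⟨a', b', ha, hb, h⟩ | ⟨w, hw, h⟩)
    · exact absurd ha (d.f₁_ne_f₂ a' a)
    · rwa [d.f₂.injective ha, d.f₂.injective hb] at h
    · rcases h with ⟨(⟨h₁, h₂⟩ | ⟨h₁, h₂⟩), _⟩ | ⟨(⟨h₁, h₂⟩ | ⟨h₁, h₂⟩), _⟩ <;>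
        exact absurd h₁.symm (d.f₁_ne_f₂ _ _)
  · exact fun h => Or.inr (Or.inl ⟨a, b, rfl, rfl, h⟩)

theorem f₁_adj_f₂_iff {a : V₁} {w : {w : V₂ // w ≠ d.z}} : G.Adj (d.f₁ a) (d.f₂ w) ↔
    (a = d.x ∧ w.1 ∈ d.S) ∨ (a = d.y ∧ G₂.Adj d.z w.1 ∧ w.1 ∉ d.S) := by
  rw [d.adj_iff]
  constructor
  · rintro (⟨a', b', -, hb, -⟩ | ⟨a', -, ha, -⟩ | ⟨w', hw', h⟩)
    · exact absurd hb (d.f₁_ne_f₂ b' w)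
    · exact absurd ha.symm (d.f₁_ne_f₂ a a')
    · rcases h with ⟨(⟨h₁, h₂⟩ | ⟨h₁, -⟩), hmem⟩ | ⟨(⟨h₁, h₂⟩ | ⟨h₁, -⟩), hmem⟩
      · rw [← d.f₂.injective h₂] at hmem
        exact Or.inl ⟨d.f₁.injective h₁, hmem⟩
      · exact absurd h₁.symm (d.f₁_ne_f₂ _ _)
      · rw [← d.f₂.injective h₂] at hmem hw'
        exact Or.inr ⟨d.f₁.injective h₁, hw', hmem⟩
      · exact absurd h₁.symm (d.f₁_ne_f₂ _ _)
  · rintro (⟨rfl, h⟩ | ⟨rfl, hz, h⟩)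
    · exact Or.inr (Or.inr ⟨w, d.adj_z_of_mem_S _ h, Or.inl ⟨Or.inl ⟨rfl, rfl⟩, h⟩⟩)
    · exact Or.inr (Or.inr ⟨w, hz, Or.inr ⟨Or.inl ⟨rfl, rfl⟩, h⟩⟩)

theorem f₁x_adj_f₂_iff {w : {w : V₂ // w ≠ d.z}} : G.Adj (d.f₁ d.x) (d.f₂ w) ↔ w.1 ∈ d.S := by
  simp [f₁_adj_f₂_iff, d.x_ne_y]

theorem f₁y_adj_f₂_iff {w : {w : V₂ // w ≠ d.z}} :
    G.Adj (d.f₁ d.y) (d.f₂ w) ↔ G₂.Adj d.z w.1 ∧ w.1 ∉ d.S := by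
  simp [f₁_adj_f₂_iff, d.x_ne_y.symm]

protected theorem finite (d : OreData G G₁ G₂) [Finite V₁] [Finite V₂] : Finite V :=
  Finite.of_surjective (Sum.elim d.f₁ d.f₂) fun v => by
    rcases d.exists_eq_f₁_or_f₂ v with ⟨a, rfl⟩ | ⟨b, rfl⟩
    exacts [⟨Sum.inl a, rfl⟩, ⟨Sum.inr b, rfl⟩]

/-- The same composition with the roles of `x` and `y` exchanged. -/
def symm : OreData G G₁ G₂ where
  x := d.y
  y := d.x
  z := d.z
  f₁ := d.f₁
  f₂ := d.f₂
  S := G₂.neighborSet d.z \ d.S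
  adj_xy := d.adj_xy.symm
  adj_z_of_mem_S := fun _ hw => hw.1
  S_nonempty := d.nonempty_neighborSet_diff_S
  nonempty_neighborSet_diff_S := by
    obtain ⟨w, hw⟩ := d.S_nonempty
    exact ⟨w, d.adj_z_of_mem_S w hw, fun hc => hc.2 hw⟩
  disjoint_range := d.disjoint_range
  range_union_range := d.range_union_range
  adj_iff := by
    intro a b
    rw [d.adj_iff a b]
    refine or_congr ⟨?_, ?_⟩ (or_congr Iff.rfl (exists_congr fun w => and_congr_right fun hw => ?_))
    · rintro ⟨a', b', h₁, h₂, h₃, h₄, h₅⟩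
      exact ⟨a', b', h₁, h₂, h₃, h₅, h₄⟩
    · rintro ⟨a', b', h₁, h₂, h₃, h₄, h₅⟩
      exact ⟨a', b', h₁, h₂, h₃, h₅, h₄⟩
    · have : w.1 ∈ G₂.neighborSet d.z \ d.S ↔ w.1 ∉ d.S := ⟨fun h => h.2, fun h => ⟨hw, h⟩⟩
      rw [this, or_comm, not_not]

open Classical in
/-- Undoing the split: `z` is sent to `x` and every other vertex of `G₂` to its copy. -/
noncomputable def fold (w : V₂) : V := if h : w = d.z then d.f₁ d.x else d.f₂ ⟨w, h⟩

theorem fold_z : d.fold d.z = d.f₁ d.x := dif_pos rfl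

theorem fold_val (w : {w : V₂ // w ≠ d.z}) : d.fold w.1 = d.f₂ w := dif_neg w.2

theorem fold_adj_fold {a b : V₂} (hab : G₂.Adj a b) :
    G.Adj (d.fold a) (d.fold b) ∨ (a = d.z ∧ b ∉ d.S) ∨ (b = d.z ∧ a ∉ d.S) := by
  by_cases ha : a = d.z <;> by_cases hb : b = d.z
  · exact absurd (ha.trans hb.symm) hab.ne
  · subst ha
    by_cases hbS : b ∈ d.S
    · rw [d.fold_z, d.fold_val ⟨b, hb⟩]
      exact Or.inl (d.f₁x_adj_f₂_iff.mpr hbS)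
    · exact Or.inr (Or.inl ⟨rfl, hbS⟩)
  · subst hb
    by_cases haS : a ∈ d.S
    · rw [d.fold_z, d.fold_val ⟨a, ha⟩]
      exact Or.inl (d.f₁x_adj_f₂_iff.mpr haS).symm
    · exact Or.inr (Or.inr ⟨rfl, haS⟩)
  · rw [d.fold_val ⟨a, ha⟩, d.fold_val ⟨b, hb⟩]
    exact Or.inl (d.f₂_adj_f₂_iff.mpr hab)

/-- `R₁` of the header; `R₂` is `trace₂ R`, or `part₂ R` as a subset of `V₂ - z`. -/
def part₁ (R : Set V) : Set V₁ := d.f₁ ⁻¹' R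

def part₂ (R : Set V) : Set {w : V₂ // w ≠ d.z} := d.f₂ ⁻¹' R

def trace₂ (R : Set V) : Set V₂ := Subtype.val '' d.part₂ R

/-- The vertices of `B` that the split attaches to `x`. -/
def nbrsX (B : Set {w : V₂ // w ≠ d.z}) : Set {w : V₂ // w ≠ d.z} := {w ∈ B | w.1 ∈ d.S}

/-- The vertices of `B` that the split attaches to `y`. -/
def nbrsY (B : Set {w : V₂ // w ≠ d.z}) : Set {w : V₂ // w ≠ d.z} :=
  {w ∈ B | G₂.Adj d.z w.1 ∧ w.1 ∉ d.S}

theorem mem_trace₂ {w : V₂} : w ∈ d.trace₂ R ↔ ∃ h : w ≠ d.z, d.f₂ ⟨w, h⟩ ∈ R := by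
  constructor
  · rintro ⟨u, hu, rfl⟩
    exact ⟨u.2, hu⟩
  · rintro ⟨h, hw⟩
    exact ⟨⟨w, h⟩, hw, rfl⟩

theorem z_notMem_trace₂ : d.z ∉ d.trace₂ R := fun h => (d.mem_trace₂.mp h).1 rfl

theorem eq_image_part₁_union_image_part₂ (R : Set V) :
    R = d.f₁ '' d.part₁ R ∪ d.f₂ '' d.part₂ R := by
  ext v
  constructor
  · intro hv
    rcases d.exists_eq_f₁_or_f₂ v with ⟨a, rfl⟩ | ⟨b, rfl⟩
    exacts [Or.inl ⟨a, hv, rfl⟩, Or.inr ⟨b, hv, rfl⟩]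
  · rintro (⟨a, ha, rfl⟩ | ⟨b, hb, rfl⟩)
    exacts [ha, hb]

theorem disjoint_image_f₁_image_f₂ (A : Set V₁) (B : Set {w : V₂ // w ≠ d.z}) :
    Disjoint (d.f₁ '' A) (d.f₂ '' B) := by
  rw [Set.disjoint_left]
  rintro v ⟨a, -, rfl⟩ ⟨b, -, hba⟩
  exact d.f₁_ne_f₂ a b hba.symm

theorem ncard_trace₂ (R : Set V) : (d.trace₂ R).ncard = (d.part₂ R).ncard :=
  Set.ncard_image_of_injective _ Subtype.val_injective

theorem ncard_insert_z_trace₂ [Finite V₂] (R : Set V) :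
    (insert d.z (d.trace₂ R)).ncard = (d.part₂ R).ncard + 1 := by
  rw [Set.ncard_insert_of_notMem d.z_notMem_trace₂, d.ncard_trace₂]

theorem ncard_eq_part₁_add_part₂ [Finite V] (R : Set V) :
    R.ncard = (d.part₁ R).ncard + (d.part₂ R).ncard := by
  nth_rewrite 1 [d.eq_image_part₁_union_image_part₂ R]
  rw [Set.ncard_union_eq (d.disjoint_image_f₁_image_f₂ _ _),
    Set.ncard_image_of_injective _ d.f₁.injective, Set.ncard_image_of_injective _ d.f₂.injective]

theorem val_mem_trace₂ {w : {w : V₂ // w ≠ d.z}} : w.1 ∈ d.trace₂ R ↔ d.f₂ w ∈ R :=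
  d.mem_trace₂.trans ⟨fun ⟨_, h⟩ => h, fun h => ⟨w.2, h⟩⟩

theorem val_mem_insert_z_trace₂ {w : {w : V₂ // w ≠ d.z}} :
    w.1 ∈ insert d.z (d.trace₂ R) ↔ d.f₂ w ∈ R :=
  (or_iff_right w.2).trans d.val_mem_trace₂

theorem mapsTo_fold_trace₂ : Set.MapsTo d.fold (d.trace₂ R) R := by
  rintro _ ⟨w, hw, rfl⟩
  rwa [d.fold_val]

theorem mapsTo_fold_insert_z_trace₂ (hx : d.f₁ d.x ∈ R) :
    Set.MapsTo d.fold (insert d.z (d.trace₂ R)) R := by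
  rintro w (rfl | hw)
  · rwa [d.fold_z]
  · exact d.mapsTo_fold_trace₂ hw

theorem part₁_nonempty_or_part₂_nonempty (hne : R.Nonempty) :
    (d.part₁ R).Nonempty ∨ (d.part₂ R).Nonempty := by
  obtain ⟨v, hv⟩ := hne
  rcases d.exists_eq_f₁_or_f₂ v with ⟨a, rfl⟩ | ⟨w, rfl⟩
  exacts [Or.inl ⟨a, hv⟩, Or.inr ⟨w, hv⟩]

theorem insert_z_trace₂_eq_univ_iff :
    insert d.z (d.trace₂ R) = Set.univ ↔ d.part₂ R = Set.univ := by
  simp only [Set.eq_univ_iff_forall]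
  constructor
  · exact fun h w => d.val_mem_insert_z_trace₂.mp (h w.1)
  · intro h w
    by_cases hw : w = d.z
    · exact Or.inl hw
    · exact Or.inr (d.val_mem_trace₂ (w := ⟨w, hw⟩) |>.mpr (h _))

theorem eq_univ_of_part₁_of_part₂ (hA : d.part₁ R = Set.univ) (hB : d.part₂ R = Set.univ) :
    R = Set.univ := by
  rw [d.eq_image_part₁_union_image_part₂ R, hA, hB, Set.image_univ, Set.image_univ,
    d.range_union_range]

theorem edgeSet_inter_sym2_image_f₁ (A : Set V₁) :
    G.edgeSet ∩ (d.f₁ '' A).sym2 =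
      Sym2.map d.f₁ '' ((G₁.edgeSet ∩ A.sym2) \ {s(d.x, d.y)}) := by
  rw [Set.sym2_image, Set.inter_comm, ← Set.image_inter_preimage]
  congr 1
  ext e
  induction e using Sym2.ind with
  | h a b =>
    simp only [Set.mem_inter_iff, Set.mem_preimage, Sym2.map_mk, mem_edgeSet, d.f₁_adj_f₁_iff,
      Set.mem_sdiff, Set.mem_singleton_iff, Sym2.eq_iff, Set.mk_mem_sym2_iff]
    tauto

theorem numEdgesIn_image_f₁ {A : Set V₁} (hxy : ¬(d.x ∈ A ∧ d.y ∈ A)) :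
    numEdgesIn G (d.f₁ '' A) = numEdgesIn G₁ A := by
  rw [numEdgesIn, numEdgesIn, d.edgeSet_inter_sym2_image_f₁ A,
    Set.ncard_image_of_injective _ (Sym2.map.injective d.f₁.injective),
    Set.sdiff_singleton_eq_self fun h => hxy h.2]

theorem numEdgesIn_image_f₁_add_one [Finite V₁] {A : Set V₁} (hx : d.x ∈ A) (hy : d.y ∈ A) :
    numEdgesIn G (d.f₁ '' A) + 1 = numEdgesIn G₁ A := by
  rw [numEdgesIn, numEdgesIn, d.edgeSet_inter_sym2_image_f₁ A,
    Set.ncard_image_of_injective _ (Sym2.map.injective d.f₁.injective),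
    Set.ncard_sdiff_singleton_add_one (show s(d.x, d.y) ∈ G₁.edgeSet ∩ A.sym2 from
      ⟨d.adj_xy, hx, hy⟩)]

theorem numEdgesIn_image_f₂ (B : Set {w : V₂ // w ≠ d.z}) :
    numEdgesIn G (d.f₂ '' B) = numEdgesIn G₂ (Subtype.val '' B) := by
  have key : ∀ {β : Type} {H : SimpleGraph β} {g : {w : V₂ // w ≠ d.z} → β},
      Function.Injective g → (∀ a b, H.Adj (g a) (g b) ↔ G₂.Adj a.1 b.1) →
      numEdgesIn H (g '' B) = (B.sym2 ∩ {e | ∃ a b, e = s(a, b) ∧ G₂.Adj a.1 b.1}).ncard := by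
    intro β H g hinj hg
    rw [numEdgesIn, Set.sym2_image, Set.inter_comm, ← Set.image_inter_preimage,
      Set.ncard_image_of_injective _ (Sym2.map.injective hinj)]
    congr 2
    ext e
    induction e using Sym2.ind with
    | h a b =>
      simp only [Set.mem_preimage, Sym2.map_mk, mem_edgeSet, hg, Set.mem_ofPred_eq]
      refine ⟨fun h => ⟨a, b, rfl, h⟩, ?_⟩
      rintro ⟨a', b', he, h⟩
      rcases Sym2.eq_iff.mp he with ⟨rfl, rfl⟩ | ⟨rfl, rfl⟩
      exacts [h, h.symm]
  rw [key d.f₂.injective fun _ _ => d.f₂_adj_f₂_iff, key Subtype.val_injective fun _ _ => Iff.rfl]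

theorem numEdgesIn_insert_z [Finite V₂] (B : Set {w : V₂ // w ≠ d.z}) :
    numEdgesIn G₂ (insert d.z (Subtype.val '' B)) =
      numEdgesIn G₂ (Subtype.val '' B) + (d.nbrsX B).ncard + (d.nbrsY B).ncard := by
  have hz : d.z ∉ Subtype.val '' B := fun ⟨u, _, hu⟩ => u.2 hu
  have hN : G₂.neighborSet d.z ∩ Subtype.val '' B = Subtype.val '' (d.nbrsX B ∪ d.nbrsY B) := by
    ext v
    simp only [Set.mem_inter_iff, mem_neighborSet, Set.mem_image, Set.mem_union, nbrsX, nbrsY,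
      Set.mem_ofPred_eq]
    constructor
    · rintro ⟨hadj, w, hw, rfl⟩
      by_cases hS : w.1 ∈ d.S
      exacts [⟨w, Or.inl ⟨hw, hS⟩, rfl⟩, ⟨w, Or.inr ⟨hw, hadj, hS⟩, rfl⟩]
    · rintro ⟨w, ⟨hw, hS⟩ | ⟨hw, hadj, -⟩, rfl⟩
      exacts [⟨d.adj_z_of_mem_S _ hS, w, hw, rfl⟩, ⟨hadj, w, hw, rfl⟩]
  have hdisj : Disjoint (d.nbrsX B) (d.nbrsY B) :=
    Set.disjoint_left.mpr fun _ hX hY => hY.2.2 hX.2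
  rw [numEdgesIn_insert G₂ hz, hN, Set.ncard_image_of_injective _ Subtype.val_injective,
    Set.ncard_union_eq hdisj, add_assoc]

theorem numEdgesBetween_f₁x (B : Set {w : V₂ // w ≠ d.z}) :
    numEdgesBetween G {d.f₁ d.x} (d.f₂ '' B) = (d.nbrsX B).ncard := by
  have hN : G.neighborSet (d.f₁ d.x) ∩ d.f₂ '' B = d.f₂ '' d.nbrsX B := by
    ext v
    constructor
    · rintro ⟨hadj, w, hw, rfl⟩
      exact ⟨w, ⟨hw, d.f₁x_adj_f₂_iff.mp hadj⟩, rfl⟩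
    · rintro ⟨w, ⟨hw, hwS⟩, rfl⟩
      exact ⟨d.f₁x_adj_f₂_iff.mpr hwS, w, hw, rfl⟩
  have hxB : d.f₁ d.x ∉ d.f₂ '' B := fun ⟨w, _, hw⟩ => d.f₁_ne_f₂ _ w hw.symm
  rw [numEdgesBetween_singleton G hxB, hN,
    Set.ncard_image_of_injective _ d.f₂.injective]

theorem numEdgesBetween_f₁y (B : Set {w : V₂ // w ≠ d.z}) :
    numEdgesBetween G {d.f₁ d.y} (d.f₂ '' B) = (d.nbrsY B).ncard :=
  d.symm.numEdgesBetween_f₁x B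

theorem numEdgesBetween_image_f₁_image_f₂ {A : Set V₁} {B : Set {w : V₂ // w ≠ d.z}}
    {P : Set V} (hP : P ⊆ d.f₁ '' A) (hxP : d.x ∈ A → d.f₁ d.x ∈ P)
    (hyP : d.y ∈ A → d.f₁ d.y ∈ P) :
    numEdgesBetween G (d.f₁ '' A) (d.f₂ '' B) = numEdgesBetween G P (d.f₂ '' B) := by
  refine numEdgesBetween_of_subset G hP ?_
  rintro _ ⟨a, ha, rfl⟩ _ ⟨w, -, rfl⟩ hadj
  rcases d.f₁_adj_f₂_iff.mp hadj with ⟨rfl, -⟩ | ⟨rfl, -⟩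
  exacts [hxP ha, hyP ha]

theorem numEdgesIn_eq_of_x_notMem_of_y_notMem [Finite V] (hx : d.x ∉ d.part₁ R)
    (hy : d.y ∉ d.part₁ R) :
    numEdgesIn G R = numEdgesIn G₁ (d.part₁ R) + numEdgesIn G₂ (d.trace₂ R) := by
  have hcross : numEdgesBetween G (d.f₁ '' d.part₁ R) (d.f₂ '' d.part₂ R) = 0 := by
    rw [d.numEdgesBetween_image_f₁_image_f₂ (Set.empty_subset _) (absurd · hx) (absurd · hy),
      numEdgesBetween_empty]
  conv_lhs => rw [d.eq_image_part₁_union_image_part₂ R]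
  rw [numEdgesIn_union G (d.disjoint_image_f₁_image_f₂ _ _), d.numEdgesIn_image_f₁ (hx ·.1),
    d.numEdgesIn_image_f₂, hcross, add_zero, trace₂]

theorem numEdgesIn_eq_of_x_mem_of_y_notMem [Finite V] (hx : d.x ∈ d.part₁ R)
    (hy : d.y ∉ d.part₁ R) :
    numEdgesIn G R = numEdgesIn G₁ (d.part₁ R) + numEdgesIn G₂ (d.trace₂ R) +
      (d.nbrsX (d.part₂ R)).ncard := by
  have hcross : numEdgesBetween G (d.f₁ '' d.part₁ R) (d.f₂ '' d.part₂ R) =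
      (d.nbrsX (d.part₂ R)).ncard := by
    rw [d.numEdgesBetween_image_f₁_image_f₂ (Set.singleton_subset_iff.mpr ⟨d.x, hx, rfl⟩)
      (fun _ => rfl) (absurd · hy), d.numEdgesBetween_f₁x]
  conv_lhs => rw [d.eq_image_part₁_union_image_part₂ R]
  rw [numEdgesIn_union G (d.disjoint_image_f₁_image_f₂ _ _), d.numEdgesIn_image_f₁ (hy ·.2),
    d.numEdgesIn_image_f₂, hcross, trace₂]

theorem numEdgesIn_add_one_eq_of_x_mem_of_y_mem [Finite V] [Finite V₁] (hx : d.x ∈ d.part₁ R)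
    (hy : d.y ∈ d.part₁ R) :
    numEdgesIn G R + 1 = numEdgesIn G₁ (d.part₁ R) + numEdgesIn G₂ (d.trace₂ R) +
      (d.nbrsX (d.part₂ R)).ncard + (d.nbrsY (d.part₂ R)).ncard := by
  have hxy : d.f₁ d.x ≠ d.f₁ d.y := d.f₁.injective.ne d.x_ne_y
  have hcross : numEdgesBetween G (d.f₁ '' d.part₁ R) (d.f₂ '' d.part₂ R) =
      (d.nbrsX (d.part₂ R)).ncard + (d.nbrsY (d.part₂ R)).ncard := by
    rw [d.numEdgesBetween_image_f₁_image_f₂ (P := {d.f₁ d.x} ∪ {d.f₁ d.y})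
      (Set.union_subset (Set.singleton_subset_iff.mpr ⟨d.x, hx, rfl⟩)
        (Set.singleton_subset_iff.mpr ⟨d.y, hy, rfl⟩)) (fun _ => Or.inl rfl) (fun _ => Or.inr rfl),
      numEdgesBetween_union_left G (Set.disjoint_singleton.mpr hxy), d.numEdgesBetween_f₁x,
      d.numEdgesBetween_f₁y]
    rw [Set.disjoint_left]
    rintro _ (rfl | rfl) ⟨w, -, hw⟩
    exacts [d.f₁_ne_f₂ _ w hw.symm, d.f₁_ne_f₂ _ w hw.symm]
  conv_lhs => rw [d.eq_image_part₁_union_image_part₂ R]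
  rw [numEdgesIn_union G (d.disjoint_image_f₁_image_f₂ _ _), d.numEdgesIn_image_f₂, hcross,
    ← d.numEdgesIn_image_f₁_add_one hx hy, trace₂]
  ring

theorem potKYOn_eq_of_x_notMem_of_y_notMem [Finite V] (hx : d.x ∉ d.part₁ R)
    (hy : d.y ∉ d.part₁ R) :
    potKYOn G R = potKYOn G₁ (d.part₁ R) + potKYOn G₂ (d.trace₂ R) := by
  rw [potKYOn_eq, potKYOn_eq, potKYOn_eq, d.numEdgesIn_eq_of_x_notMem_of_y_notMem hx hy,
    d.ncard_eq_part₁_add_part₂, d.ncard_trace₂]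
  push_cast
  ring

theorem potKYOn_eq_of_x_mem_of_y_notMem [Finite V] [Finite V₂] (hx : d.x ∈ d.part₁ R)
    (hy : d.y ∉ d.part₁ R) :
    potKYOn G R = potKYOn G₁ (d.part₁ R) + potKYOn G₂ (insert d.z (d.trace₂ R)) - 9 +
      4 * ((d.nbrsY (d.part₂ R)).ncard : ℝ) := by
  rw [potKYOn_eq, potKYOn_eq, potKYOn_eq, d.numEdgesIn_eq_of_x_mem_of_y_notMem hx hy,
    d.ncard_eq_part₁_add_part₂, d.ncard_insert_z_trace₂, trace₂, d.numEdgesIn_insert_z]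
  push_cast
  ring

theorem potKYOn_eq_of_x_mem_of_y_mem [Finite V] [Finite V₁] [Finite V₂] (hx : d.x ∈ d.part₁ R)
    (hy : d.y ∈ d.part₁ R) :
    potKYOn G R = potKYOn G₁ (d.part₁ R) + potKYOn G₂ (insert d.z (d.trace₂ R)) - 5 := by
  have hE : (numEdgesIn G R : ℝ) + 1 = numEdgesIn G₁ (d.part₁ R) +
      numEdgesIn G₂ (d.trace₂ R) + (d.nbrsX (d.part₂ R)).ncard +
      (d.nbrsY (d.part₂ R)).ncard := by
    exact_mod_cast d.numEdgesIn_add_one_eq_of_x_mem_of_y_mem hx hy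
  rw [potKYOn_eq, potKYOn_eq, potKYOn_eq, d.ncard_eq_part₁_add_part₂, d.ncard_insert_z_trace₂,
    trace₂, d.numEdgesIn_insert_z, ← trace₂]
  push_cast
  linarith

theorem potKYOn_eq_of_part₂_eq_empty [Finite V] (hB : d.part₂ R = ∅)
    (hxy : ¬(d.x ∈ d.part₁ R ∧ d.y ∈ d.part₁ R)) : potKYOn G R = potKYOn G₁ (d.part₁ R) := by
  have hR : R = d.f₁ '' d.part₁ R := by
    conv_lhs => rw [d.eq_image_part₁_union_image_part₂ R, hB, Set.image_empty, Set.union_empty]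
  rw [potKYOn_eq, potKYOn_eq, hR, d.numEdgesIn_image_f₁ hxy,
    Set.ncard_image_of_injective _ d.f₁.injective, ← hR]

theorem potKYOn_eq_of_part₁_eq_empty [Finite V] (hA : d.part₁ R = ∅) :
    potKYOn G R = potKYOn G₂ (d.trace₂ R) := by
  have hR : R = d.f₂ '' d.part₂ R := by
    conv_lhs => rw [d.eq_image_part₁_union_image_part₂ R, hA, Set.image_empty, Set.empty_union]
  rw [potKYOn_eq, potKYOn_eq, hR, d.numEdgesIn_image_f₂,
    Set.ncard_image_of_injective _ d.f₂.injective, ← d.ncard_trace₂, ← hR, trace₂]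

section Colorings

variable (φ : (G.induce R).Coloring (Fin 4))

/-- The condition for `φ ∘ f₁` to colour `G₁[R₁]` properly: `xy` is the only edge of `G₁` that
`G` lacks. -/
def SeparatesXY : Prop :=
  d.f₁ d.x ∈ R → d.f₁ d.y ∈ R → ambientColor φ (d.f₁ d.x) ≠ ambientColor φ (d.f₁ d.y)

/-- The condition for `φ ∘ fold` to colour `G₂[R₂ + z]` properly: the edges of `G₂` that `G`
lacks join `z` to the vertices the split attaches to `y`. -/
def SeparatesZ : Prop :=
  ∀ w, d.fold w ∈ R → G₂.Adj d.z w → w ∉ d.S →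
    ambientColor φ (d.fold w) ≠ ambientColor φ (d.f₁ d.x)

variable {d φ}

theorem SeparatesXY.ambientColor_f₁_ne (h : d.SeparatesXY φ) {a b : V₁} (ha : d.f₁ a ∈ R)
    (hb : d.f₁ b ∈ R) (hab : G₁.Adj a b) :
    ambientColor φ (d.f₁ a) ≠ ambientColor φ (d.f₁ b) := by
  by_cases hxy : a = d.x ∧ b = d.y
  · obtain ⟨rfl, rfl⟩ := hxy
    exact h ha hb
  by_cases hyx : a = d.y ∧ b = d.x
  · obtain ⟨rfl, rfl⟩ := hyx
    exact (h hb ha).symm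
  exact ambientColor_ne_of_adj φ ha hb (d.f₁_adj_f₁_iff.mpr ⟨hab, hxy, hyx⟩)

theorem SeparatesZ.ambientColor_fold_ne (h : d.SeparatesZ φ) {a b : V₂} (ha : d.fold a ∈ R)
    (hb : d.fold b ∈ R) (hab : G₂.Adj a b) :
    ambientColor φ (d.fold a) ≠ ambientColor φ (d.fold b) := by
  rcases d.fold_adj_fold hab with hG | ⟨rfl, hbS⟩ | ⟨rfl, haS⟩
  · exact ambientColor_ne_of_adj φ ha hb hG
  · rw [d.fold_z]
    exact (h b hb hab hbS).symm
  · rw [d.fold_z]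
    exact h a ha hab.symm haS

theorem separatesZ_of_ambientColor_eq (hy : d.f₁ d.y ∈ R)
    (heq : ambientColor φ (d.f₁ d.x) = ambientColor φ (d.f₁ d.y)) : d.SeparatesZ φ := by
  intro w hw hzw hwS
  have hwz : w ≠ d.z := hzw.ne'
  rw [heq, d.fold_val ⟨w, hwz⟩] at *
  exact (ambientColor_ne_of_adj φ hy hw (d.f₁y_adj_f₂_iff.mpr ⟨hzw, hwS⟩)).symm

variable (d φ)

theorem colorable₁_of_separatesXY (hA : d.part₁ R = Set.univ) (h : d.SeparatesXY φ) :
    G₁.Colorable 4 :=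
  have hmem : ∀ a, d.f₁ a ∈ R := fun a => (hA ▸ Set.mem_univ a : a ∈ d.part₁ R)
  ⟨Coloring.mk (fun a => ambientColor φ (d.f₁ a)) fun hab =>
    h.ambientColor_f₁_ne (hmem _) (hmem _) hab⟩

theorem fold_mem_of_part₂_eq_univ (hB : d.part₂ R = Set.univ) (hx : d.f₁ d.x ∈ R) (w : V₂) :
    d.fold w ∈ R := by
  by_cases hw : w = d.z
  · rwa [hw, d.fold_z]
  · rw [d.fold_val ⟨w, hw⟩]
    exact (hB ▸ Set.mem_univ _ : (⟨w, hw⟩ : {w : V₂ // w ≠ d.z}) ∈ d.part₂ R)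

theorem colorable₂_of_separatesZ (hB : d.part₂ R = Set.univ) (hx : d.f₁ d.x ∈ R)
    (h : d.SeparatesZ φ) : G₂.Colorable 4 :=
  have hmem := d.fold_mem_of_part₂_eq_univ hB hx
  ⟨Coloring.mk (fun w => ambientColor φ (d.fold w)) fun hab =>
    h.ambientColor_fold_ne (hmem _) (hmem _) hab⟩

theorem ambientColor_f₁x_eq_f₁y (hA : d.part₁ R = Set.univ) (hG₁ : ¬ G₁.Colorable 4) :
    ambientColor φ (d.f₁ d.x) = ambientColor φ (d.f₁ d.y) := by
  by_contra hne
  exact hG₁ (d.colorable₁_of_separatesXY φ hA fun _ _ => hne)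

theorem separatesXY_of_part₂_eq_univ (hB : d.part₂ R = Set.univ) (hG₂ : ¬ G₂.Colorable 4) :
    d.SeparatesXY φ := fun hx hy heq =>
  hG₂ (d.colorable₂_of_separatesZ φ hB hx (separatesZ_of_ambientColor_eq hy heq))

protected theorem not_colorable (d : OreData G G₁ G₂) (hG₁ : ¬ G₁.Colorable 4)
    (hG₂ : ¬ G₂.Colorable 4) : ¬ G.Colorable 4 := by
  rintro ⟨ψ⟩
  let φ : (G.induce Set.univ).Coloring (Fin 4) := Coloring.mk (fun v => ψ v.1) ψ.valid
  exact d.separatesXY_of_part₂_eq_univ φ rfl hG₂ trivial trivial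
    (d.ambientColor_f₁x_eq_f₁y φ rfl hG₁)

theorem mem_nbrsY_of_fold_mem {w : V₂} (hw : d.fold w ∈ R) (hzw : G₂.Adj d.z w)
    (hS : w ∉ d.S) : (⟨w, hzw.ne'⟩ : {w : V₂ // w ≠ d.z}) ∈ d.nbrsY (d.part₂ R) := by
  refine ⟨?_, hzw, hS⟩
  show d.f₂ _ ∈ R
  rwa [← d.fold_val ⟨w, hzw.ne'⟩]

theorem separatesZ_of_nbrsY_eq_empty (h : d.nbrsY (d.part₂ R) = ∅) : d.SeparatesZ φ :=
  fun _ hw hzw hS =>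
    (Set.eq_empty_iff_forall_notMem.mp h _ (d.mem_nbrsY_of_fold_mem hw hzw hS)).elim

theorem ambientColor_fold_eq_of_nbrsY_eq_singleton (hB : d.part₂ R = Set.univ)
    (hx : d.f₁ d.x ∈ R) (hG₂ : ¬ G₂.Colorable 4) {w₀ : {w : V₂ // w ≠ d.z}}
    (hw₀ : d.nbrsY (d.part₂ R) = {w₀}) :
    ambientColor φ (d.fold w₀) = ambientColor φ (d.f₁ d.x) := by
  by_contra hne
  refine hG₂ (d.colorable₂_of_separatesZ φ hB hx fun w hw hzw hS => ?_)
  have hw₀' := hw₀ ▸ d.mem_nbrsY_of_fold_mem hw hzw hS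
  rwa [show w = w₀.1 from congrArg Subtype.val hw₀']

variable {d}

theorem monochromatic_image_f₁ (hsep : ∀ φ : (G.induce R).Coloring (Fin 4), d.SeparatesXY φ)
    {W : Set V₁} (hW : Monochromatic G₁ (d.part₁ R) W) (hWR : W ⊆ d.part₁ R) :
    Monochromatic G R (d.f₁ '' W) :=
  hW.image d.f₁ (fun φ _ ha _ hb hab => (hsep φ).ambientColor_f₁_ne ha hb hab) hWR

theorem monochromatic_image_fold {Q : Set V₂} (hQ : Set.MapsTo d.fold Q R)
    (hsep : ∀ φ : (G.induce R).Coloring (Fin 4), d.z ∈ Q → d.SeparatesZ φ)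
    {W : Set V₂} (hW : Monochromatic G₂ Q W) (hWQ : W ⊆ Q) :
    Monochromatic G R (d.fold '' W) := by
  refine hW.image d.fold (fun φ a ha b hb hab => ?_) hWQ
  rcases d.fold_adj_fold hab with hG | ⟨rfl, -⟩ | ⟨rfl, -⟩
  · exact ambientColor_ne_of_adj φ (hQ ha) (hQ hb) hG
  all_goals exact (hsep φ ‹_›).ambientColor_fold_ne (hQ ha) (hQ hb) hab

end Colorings

theorem boundary_f₁_cases {a : V₁} (h : d.f₁ a ∈ boundary G R) :
    a ∈ boundary G₁ (d.part₁ R) ∨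
      (a = d.x ∧ ∃ w : {w : V₂ // w ≠ d.z}, w.1 ∈ d.S ∧ d.f₂ w ∉ R) ∨
      (a = d.y ∧ ∃ w : {w : V₂ // w ≠ d.z}, G₂.Adj d.z w.1 ∧ w.1 ∉ d.S ∧ d.f₂ w ∉ R) := by
  obtain ⟨haR, v, hvR, hadj⟩ := h
  rcases d.exists_eq_f₁_or_f₂ v with ⟨b, rfl⟩ | ⟨w, rfl⟩
  · exact Or.inl ⟨haR, b, hvR, (d.f₁_adj_f₁_iff.mp hadj).1⟩
  · rcases d.f₁_adj_f₂_iff.mp hadj with ⟨rfl, hS⟩ | ⟨rfl, hzw, hS⟩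
    exacts [Or.inr (Or.inl ⟨rfl, w, hS, hvR⟩), Or.inr (Or.inr ⟨rfl, w, hzw, hS, hvR⟩)]

theorem boundary_f₂_cases {w : {w : V₂ // w ≠ d.z}} (h : d.f₂ w ∈ boundary G R) :
    (∃ w' : {w : V₂ // w ≠ d.z}, d.f₂ w' ∉ R ∧ G₂.Adj w.1 w'.1) ∨
      (d.f₁ d.x ∉ R ∧ w.1 ∈ d.S) ∨ (d.f₁ d.y ∉ R ∧ G₂.Adj d.z w.1 ∧ w.1 ∉ d.S) := by
  obtain ⟨hwR, v, hvR, hadj⟩ := h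
  rcases d.exists_eq_f₁_or_f₂ v with ⟨b, rfl⟩ | ⟨w', rfl⟩
  · rcases d.f₁_adj_f₂_iff.mp hadj.symm with ⟨rfl, hS⟩ | ⟨rfl, hzw, hS⟩
    exacts [Or.inr (Or.inl ⟨hvR, hS⟩), Or.inr (Or.inr ⟨hvR, hzw, hS⟩)]
  · exact Or.inl ⟨w', hvR, d.f₂_adj_f₂_iff.mp hadj⟩

theorem boundary_subset_of_part₂_eq_empty (hB : d.part₂ R = ∅)
    (hxy : ¬(d.x ∈ d.part₁ R ∧ d.y ∈ d.part₁ R)) :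
    boundary G R ⊆ d.f₁ '' boundary G₁ (d.part₁ R) := by
  intro v hv
  rcases d.exists_eq_f₁_or_f₂ v with ⟨a, rfl⟩ | ⟨w, rfl⟩
  · refine ⟨a, ?_, rfl⟩
    rcases d.boundary_f₁_cases hv with h | ⟨rfl, -⟩ | ⟨rfl, -⟩
    · exact h
    · exact ⟨hv.1, d.y, fun hy => hxy ⟨hv.1, hy⟩, d.adj_xy⟩
    · exact ⟨hv.1, d.x, fun hx => hxy ⟨hx, hv.1⟩, d.adj_xy.symm⟩
  · exact absurd (hB ▸ hv.1 : w ∈ (∅ : Set _)) id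

theorem boundary_subset_of_part₁_eq_empty (hA : d.part₁ R = ∅) :
    boundary G R ⊆ d.fold '' boundary G₂ (d.trace₂ R) := by
  intro v hv
  rcases d.exists_eq_f₁_or_f₂ v with ⟨a, rfl⟩ | ⟨w, rfl⟩
  · exact absurd (hA ▸ hv.1 : a ∈ (∅ : Set _)) id
  refine ⟨w.1, ⟨d.val_mem_trace₂.mpr hv.1, ?_⟩, d.fold_val w⟩
  rcases d.boundary_f₂_cases hv with ⟨w', hw', hadj⟩ | ⟨-, hS⟩ | ⟨-, hzw, -⟩
  · exact ⟨w'.1, mt d.val_mem_trace₂.mp hw', hadj⟩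
  · exact ⟨d.z, d.z_notMem_trace₂, (d.adj_z_of_mem_S _ hS).symm⟩
  · exact ⟨d.z, d.z_notMem_trace₂, hzw.symm⟩

theorem boundary_subset_of_part₂_eq_univ (hB : d.part₂ R = Set.univ) (hx : d.f₁ d.x ∈ R) :
    boundary G R ⊆
      d.f₁ '' boundary G₁ (d.part₁ R) ∪ d.fold '' {w | G₂.Adj d.z w ∧ w ∉ d.S ∧ d.f₁ d.y ∉ R} := by
  have hmem : ∀ w, d.f₂ w ∈ R := fun w => (hB ▸ Set.mem_univ w : w ∈ d.part₂ R)
  intro v hv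
  rcases d.exists_eq_f₁_or_f₂ v with ⟨a, rfl⟩ | ⟨w, rfl⟩
  · rcases d.boundary_f₁_cases hv with h | ⟨-, w, -, hw⟩ | ⟨-, w, -, -, hw⟩
    exacts [Or.inl ⟨a, h, rfl⟩, absurd (hmem w) hw, absurd (hmem w) hw]
  · rcases d.boundary_f₂_cases hv with ⟨w', hw', -⟩ | ⟨hx', -⟩ | ⟨hy, hzw, hS⟩
    · exact absurd (hmem w') hw'
    · exact absurd hx hx'
    · exact Or.inr ⟨w.1, ⟨hzw, hS, hy⟩, d.fold_val w⟩

theorem boundary_subset_of_f₁x_mem (hx : d.f₁ d.x ∈ R)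
    (hY : d.f₁ d.y ∉ R → d.nbrsY (d.part₂ R) = ∅) :
    boundary G R ⊆ d.f₁ '' boundary G₁ (d.part₁ R) ∪
      d.fold '' boundary G₂ (insert d.z (d.trace₂ R)) ∪
      {v | v ∈ R ∧ v = d.f₁ d.y ∧ d.z ∈ boundary G₂ (insert d.z (d.trace₂ R))} := by
  have hz : ∀ w : {w : V₂ // w ≠ d.z}, d.f₂ w ∉ R → G₂.Adj d.z w.1 →
      d.z ∈ boundary G₂ (insert d.z (d.trace₂ R)) :=
    fun w hw hzw => ⟨Set.mem_insert _ _, w.1, mt d.val_mem_insert_z_trace₂.mp hw, hzw⟩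
  intro v hv
  rcases d.exists_eq_f₁_or_f₂ v with ⟨a, rfl⟩ | ⟨w, rfl⟩
  · rcases d.boundary_f₁_cases hv with h | ⟨rfl, w, hS, hw⟩ | ⟨rfl, w, hzw, -, hw⟩
    · exact Or.inl (Or.inl ⟨a, h, rfl⟩)
    · exact Or.inl (Or.inr ⟨d.z, hz w hw (d.adj_z_of_mem_S _ hS), d.fold_z⟩)
    · exact Or.inr ⟨hv.1, rfl, hz w hw hzw⟩
  · refine Or.inl (Or.inr ⟨w.1, ?_, d.fold_val w⟩)
    rcases d.boundary_f₂_cases hv with ⟨w', hw', hadj⟩ | ⟨hx', -⟩ | ⟨hy, hzw, hS⟩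
    · exact ⟨d.val_mem_insert_z_trace₂.mpr hv.1, w'.1, mt d.val_mem_insert_z_trace₂.mp hw', hadj⟩
    · exact absurd hx hx'
    · exact absurd (hY hy ▸ ⟨hv.1, hzw, hS⟩ : w ∈ (∅ : Set _)) id

theorem nineCollapsible_of_part₂_eq_empty [Finite V] (h₁ : OreInvariant G₁) (hne : R.Nonempty)
    (hB : d.part₂ R = ∅) (hxy : ¬(d.x ∈ d.part₁ R ∧ d.y ∈ d.part₁ R)) (hp : potKYOn G R < 12) :
    NineCollapsible G R := by
  have hpot := d.potKYOn_eq_of_part₂_eq_empty hB hxy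
  have hA : (d.part₁ R).Nonempty :=
    (d.part₁_nonempty_or_part₂_nonempty hne).resolve_right (by simp [hB])
  have hA' : d.part₁ R ≠ Set.univ := fun h => hxy ⟨h ▸ Set.mem_univ _, h ▸ Set.mem_univ _⟩
  obtain ⟨hp₁, hmono₁⟩ := h₁.nineCollapsible _ hA hA' (hpot ▸ hp)
  refine ⟨hpot.trans hp₁, ?_⟩
  exact (d.monochromatic_image_f₁ (fun _ hx hy => absurd ⟨hx, hy⟩ hxy) hmono₁
    (boundary_subset _ _)).subset (d.boundary_subset_of_part₂_eq_empty hB hxy)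

theorem nineCollapsible_of_part₁_eq_empty [Finite V] (h₂ : OreInvariant G₂) (hne : R.Nonempty)
    (hA : d.part₁ R = ∅) (hp : potKYOn G R < 12) :
    NineCollapsible G R := by
  have hpot := d.potKYOn_eq_of_part₁_eq_empty hA
  have hB : (d.trace₂ R).Nonempty := Set.image_nonempty.mpr
    ((d.part₁_nonempty_or_part₂_nonempty hne).resolve_left (by simp [hA]))
  have hB' : d.trace₂ R ≠ Set.univ := fun h => d.z_notMem_trace₂ (h ▸ Set.mem_univ _)
  obtain ⟨hp₂, hmono₂⟩ := h₂.nineCollapsible _ hB hB' (hpot ▸ hp)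
  refine ⟨hpot.trans hp₂, ?_⟩
  exact (d.monochromatic_image_fold d.mapsTo_fold_trace₂
    (fun _ hz => absurd hz d.z_notMem_trace₂) hmono₂ (boundary_subset _ _)).subset
    (d.boundary_subset_of_part₁_eq_empty hA)

theorem nineCollapsible_of_x_notMem_of_y_notMem [Finite V] (h₁ : OreInvariant G₁)
    (h₂ : OreInvariant G₂) (hne : R.Nonempty)
    (hx : d.x ∉ d.part₁ R) (hy : d.y ∉ d.part₁ R) (hp : potKYOn G R < 12) :
    NineCollapsible G R := by
  by_cases hA : d.part₁ R = ∅
  · exact d.nineCollapsible_of_part₁_eq_empty h₂ hne hA hp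
  by_cases hB : d.part₂ R = ∅
  · exact d.nineCollapsible_of_part₂_eq_empty h₁ hne hB (fun h => hx h.1) hp
  have := h₁.nine_le_potKYOn (Set.nonempty_iff_ne_empty.mpr hA)
    fun h => hx (h ▸ Set.mem_univ _)
  have : 9 ≤ potKYOn G₂ (d.trace₂ R) :=
    h₂.nine_le_potKYOn (Set.image_nonempty.mpr (Set.nonempty_iff_ne_empty.mpr hB))
    fun h => d.z_notMem_trace₂ (h ▸ Set.mem_univ _)
  linarith [d.potKYOn_eq_of_x_notMem_of_y_notMem hx hy]

/-- Here `p(R) = p₁(R₁) - 4 + 4t`, where `t ≥ 1` counts the vertices attached to `y`; so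
`t = 1`, and the single such vertex is forced to take the colour of `x`. -/
theorem nineCollapsible_of_x_mem_of_y_notMem_of_part₂_eq_univ [Finite V] (h₁ : OreInvariant G₁)
    (h₂ : OreInvariant G₂) (hx : d.x ∈ d.part₁ R) (hy : d.y ∉ d.part₁ R)
    (hB : d.part₂ R = Set.univ) (hp : potKYOn G R < 12) : NineCollapsible G R := by
  have := h₂.finite
  have hsplit := d.potKYOn_eq_of_x_mem_of_y_notMem hx hy
  rw [d.insert_z_trace₂_eq_univ_iff.mpr hB, potKYOn_univ, h₂.potKY_eq] at hsplit
  have hA' : d.part₁ R ≠ Set.univ := fun h => hy (h ▸ Set.mem_univ _)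
  have hp₁ := h₁.nine_le_potKYOn ⟨d.x, hx⟩ hA'
  have ht : (d.nbrsY (d.part₂ R)).ncard = 1 := by
    obtain ⟨w, hzw, hS⟩ := d.nonempty_neighborSet_diff_S
    have hw : (⟨w, hzw.ne'⟩ : {w : V₂ // w ≠ d.z}) ∈ d.nbrsY (d.part₂ R) :=
      ⟨hB ▸ Set.mem_univ _, hzw, hS⟩
    have h1 := (Set.ncard_pos (Set.toFinite _)).mpr ⟨_, hw⟩
    have : ((d.nbrsY (d.part₂ R)).ncard : ℝ) < 2 := by linarith
    norm_cast at this
    omega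
  obtain ⟨w₀, hw₀⟩ := Set.ncard_eq_one.mp ht
  rw [ht, Nat.cast_one] at hsplit
  obtain ⟨hp₁', hmono₁⟩ := h₁.nineCollapsible _ ⟨d.x, hx⟩ hA' (by linarith)
  refine ⟨by linarith, ?_⟩
  have hmono := (d.monochromatic_image_f₁ (fun _ _ hy' => absurd hy' hy) hmono₁
    (boundary_subset _ _)).union (monochromatic_pair (a := d.f₁ d.x) (b := d.fold w₀) fun φ =>
      (d.ambientColor_fold_eq_of_nbrsY_eq_singleton φ hB hx h₂.not_colorable hw₀).symm)
    (w := d.f₁ d.x) ⟨⟨d.x, ⟨hx, d.y, hy, d.adj_xy⟩, rfl⟩, hx⟩ ⟨Or.inl rfl, hx⟩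
  refine hmono.subset ((d.boundary_subset_of_part₂_eq_univ hB hx).trans
    (Set.union_subset_union_right _ ?_))
  rintro _ ⟨w, ⟨hzw, hS, -⟩, rfl⟩
  have := hw₀ ▸ d.mem_nbrsY_of_fold_mem (d.fold_mem_of_part₂_eq_univ hB hx w) hzw hS
  exact Or.inr (congrArg d.fold (congrArg Subtype.val this))

/-- When `R₂` is neither empty nor everything, `p(R) < 12` forces `t = 0` and potential 9 on
both sides; the two transported boundaries then share the vertex `x`, the image of `z`. -/
theorem nineCollapsible_of_x_mem_of_y_notMem [Finite V] (h₁ : OreInvariant G₁)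
    (h₂ : OreInvariant G₂) (hx : d.x ∈ d.part₁ R) (hy : d.y ∉ d.part₁ R)
    (hp : potKYOn G R < 12) : NineCollapsible G R := by
  by_cases hBu : d.part₂ R = Set.univ
  · exact d.nineCollapsible_of_x_mem_of_y_notMem_of_part₂_eq_univ h₁ h₂ hx hy hBu hp
  by_cases hBe : d.part₂ R = ∅
  · exact d.nineCollapsible_of_part₂_eq_empty h₁ ⟨_, hx⟩ hBe (fun h => hy h.2) hp
  have := h₂.finite
  set Q := insert d.z (d.trace₂ R)
  have hsplit := d.potKYOn_eq_of_x_mem_of_y_notMem hx hy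
  have hA' : d.part₁ R ≠ Set.univ := fun h => hy (h ▸ Set.mem_univ _)
  have hQ' : Q ≠ Set.univ := mt d.insert_z_trace₂_eq_univ_iff.mp hBu
  have hp₁ := h₁.nine_le_potKYOn ⟨d.x, hx⟩ hA'
  have hp₂ := h₂.nine_le_potKYOn ⟨d.z, Set.mem_insert _ _⟩ hQ'
  have ht : d.nbrsY (d.part₂ R) = ∅ := by
    have : ((d.nbrsY (d.part₂ R)).ncard : ℝ) < 1 := by linarith
    norm_cast at this
    exact (Set.ncard_eq_zero (Set.toFinite _)).mp (by omega)
  rw [ht, Set.ncard_empty, Nat.cast_zero, mul_zero, add_zero] at hsplit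
  obtain ⟨hp₂', hmono₂⟩ := h₂.nineCollapsible Q ⟨d.z, Set.mem_insert _ _⟩ hQ' (by linarith)
  obtain ⟨hp₁', hmono₁⟩ := h₁.nineCollapsible _ ⟨d.x, hx⟩ hA' (by linarith)
  refine ⟨by linarith, ?_⟩
  have hzB : d.z ∈ boundary G₂ Q := by
    obtain ⟨w, hzw, hS⟩ := d.nonempty_neighborSet_diff_S
    refine ⟨Set.mem_insert _ _, w, fun hwQ => ?_, hzw⟩
    have hw : d.fold w ∈ R := d.mapsTo_fold_insert_z_trace₂ hx hwQ
    exact Set.eq_empty_iff_forall_notMem.mp ht _ (d.mem_nbrsY_of_fold_mem hw hzw hS)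
  have hmono := (d.monochromatic_image_f₁ (fun _ _ hy' => absurd hy' hy) hmono₁
    (boundary_subset _ _)).union (d.monochromatic_image_fold (d.mapsTo_fold_insert_z_trace₂ hx)
      (fun φ _ => d.separatesZ_of_nbrsY_eq_empty φ ht) hmono₂ (boundary_subset _ _))
    (w := d.f₁ d.x) ⟨⟨d.x, ⟨hx, d.y, hy, d.adj_xy⟩, rfl⟩, hx⟩ ⟨⟨d.z, hzB, d.fold_z⟩, hx⟩
  refine hmono.subset ((d.boundary_subset_of_f₁x_mem hx fun _ => ht).trans
    (Set.union_subset le_rfl ?_))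
  rintro _ ⟨hv, rfl, -⟩
  exact absurd hv hy

/-- Every colouring of `G[R]` gives `x` and `y` the same colour, as `G₁` is not 4-colourable;
so `x`, `y` and the image of the boundary of `R₂ + z` (when it contains `z`) share a colour. -/
theorem nineCollapsible_of_part₁_eq_univ [Finite V] (h₁ : OreInvariant G₁)
    (h₂ : OreInvariant G₂) (hR : R ≠ Set.univ) (hA : d.part₁ R = Set.univ)
    (hp : potKYOn G R < 12) : NineCollapsible G R := by
  have := h₁.finite
  have := h₂.finite
  have hx : d.x ∈ d.part₁ R := hA ▸ Set.mem_univ _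
  have hy : d.y ∈ d.part₁ R := hA ▸ Set.mem_univ _
  have hsplit := d.potKYOn_eq_of_x_mem_of_y_mem hx hy
  rw [hA, potKYOn_univ, h₁.potKY_eq] at hsplit
  have hQ : insert d.z (d.trace₂ R) ≠ Set.univ := fun h =>
    hR (d.eq_univ_of_part₁_of_part₂ hA (d.insert_z_trace₂_eq_univ_iff.mp h))
  obtain ⟨hp₂, hmono₂⟩ := h₂.nineCollapsible _ ⟨d.z, Set.mem_insert _ _⟩ hQ (by linarith)
  refine ⟨by linarith, ?_⟩
  have hxy := fun φ => d.ambientColor_f₁x_eq_f₁y φ hA h₁.not_colorable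
  have hmono := d.monochromatic_image_fold (d.mapsTo_fold_insert_z_trace₂ hx)
    (fun φ _ => separatesZ_of_ambientColor_eq hy (hxy φ)) hmono₂ (boundary_subset _ _)
  have hbd := d.boundary_subset_of_f₁x_mem (R := R) hx fun h => absurd hy h
  rw [hA, boundary_univ, Set.image_empty, Set.empty_union] at hbd
  by_cases hz : d.z ∈ boundary G₂ (insert d.z (d.trace₂ R))
  · refine (hmono.union (monochromatic_pair hxy) ⟨⟨d.z, hz, d.fold_z⟩, hx⟩
      ⟨Or.inl rfl, hx⟩).subset (hbd.trans (Set.union_subset_union_right _ ?_))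
    rintro _ ⟨-, rfl, -⟩
    exact Or.inr rfl
  · refine hmono.subset (hbd.trans (Set.union_subset le_rfl ?_))
    rintro _ ⟨-, -, hz'⟩
    exact absurd hz' hz

theorem nineCollapsible_of_x_mem_of_y_mem [Finite V] (h₁ : OreInvariant G₁)
    (h₂ : OreInvariant G₂) (hR : R ≠ Set.univ) (hx : d.x ∈ d.part₁ R) (hy : d.y ∈ d.part₁ R)
    (hp : potKYOn G R < 12) : NineCollapsible G R := by
  by_cases hA : d.part₁ R = Set.univ
  · exact d.nineCollapsible_of_part₁_eq_univ h₁ h₂ hR hA hp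
  have := h₁.finite
  have := h₂.finite
  have hsplit := d.potKYOn_eq_of_x_mem_of_y_mem hx hy
  have hp₁ := h₁.nine_le_potKYOn ⟨d.x, hx⟩ hA
  by_cases hB : d.part₂ R = Set.univ
  · rw [d.insert_z_trace₂_eq_univ_iff.mpr hB, potKYOn_univ, h₂.potKY_eq] at hsplit
    obtain ⟨hp₁', hmono₁⟩ := h₁.nineCollapsible _ ⟨d.x, hx⟩ hA (by linarith)
    refine ⟨by linarith, ?_⟩
    refine (d.monochromatic_image_f₁
      (fun φ => d.separatesXY_of_part₂_eq_univ φ hB h₂.not_colorable) hmono₁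
      (boundary_subset _ _)).subset ((d.boundary_subset_of_part₂_eq_univ hB hx).trans
        (Set.union_subset le_rfl ?_))
    rintro _ ⟨w, ⟨-, -, hy'⟩, -⟩
    exact absurd hy hy'
  · have := h₂.nine_le_potKYOn ⟨d.z, Set.mem_insert _ _⟩
      (mt d.insert_z_trace₂_eq_univ_iff.mp hB)
    linarith

protected theorem oreInvariant (d : OreData G G₁ G₂) (h₁ : OreInvariant G₁)
    (h₂ : OreInvariant G₂) : OreInvariant G := by
  have := h₁.finite
  have := h₂.finite
  have := d.finite
  refine ⟨d.finite, ?_, d.not_colorable h₁.not_colorable h₂.not_colorable, ?_⟩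
  · have hsplit := d.potKYOn_eq_of_x_mem_of_y_mem (R := Set.univ) trivial trivial
    rw [d.insert_z_trace₂_eq_univ_iff.mpr Set.preimage_univ] at hsplit
    rw [← potKYOn_univ, hsplit, show d.part₁ Set.univ = Set.univ from Set.preimage_univ,
      potKYOn_univ, potKYOn_univ, h₁.potKY_eq, h₂.potKY_eq]
    norm_num
  · intro R hne hR hp
    by_cases hx : d.x ∈ d.part₁ R <;> by_cases hy : d.y ∈ d.part₁ R
    · exact d.nineCollapsible_of_x_mem_of_y_mem h₁ h₂ hR hx hy hp
    · exact d.nineCollapsible_of_x_mem_of_y_notMem h₁ h₂ hx hy hp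
    · exact d.symm.nineCollapsible_of_x_mem_of_y_notMem h₁ h₂ hy hx hp
    · exact d.nineCollapsible_of_x_notMem_of_y_notMem h₁ h₂ hne hx hy hp

end OreData

end OreComposition

theorem Is5Ore.oreInvariant {V : Type} {G : SimpleGraph V} (h : Is5Ore G) : OreInvariant G := by
  induction h with
  | k5 h => exact oreInvariant_of_isK5 h
  | ore _ _ hcomp ih₁ ih₂ => exact hcomp.nonempty_oreData.some.oreInvariant ih₁ ih₂

theorem stmt_11_general {V : Type} (G : SimpleGraph V) (h5 : Is5Ore G)
    (R : Set V) (hR : R ≠ Set.univ) (hR5 : 5 ≤ R.ncard) (hp : potKYOn G R < 12) :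
    Collapsible G R ∧ potKYOn G R = 9 := by
  have hne : R.Nonempty := Set.nonempty_of_ncard_ne_zero (by omega)
  obtain ⟨hp9, hmono⟩ := h5.oreInvariant.nineCollapsible R hne hR hp
  refine ⟨⟨hR, hR5, fun φ u v hu hv => ?_⟩, hp9⟩
  rw [← ambientColor_of_mem φ u.2, ← ambientColor_of_mem φ v.2]
  exact hmono φ u ⟨hu, u.2⟩ v ⟨hv, v.2⟩

/-- If `G` is 5-Ore and `R ⊊ V(G)` with `|R| ≥ 5` and `p_KY(R) < 12`, then `R` is collapsible
and `p_KY(R) = 9`. -/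
theorem stmt_11 {V : Type} [Fintype V] (G : SimpleGraph V) (h5 : Is5Ore G)
    (R : Set V) (hR : R ≠ Set.univ) (hR5 : 5 ≤ R.ncard) (hp : potKYOn G R < 12) :
    Collapsible G R ∧ potKYOn G R = 9 :=
  stmt_11_general G h5 R hR hR5 hp

end Postle
end
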